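/- arXiv:2111.07066 — 4 statements merged into one kernel-verified Lean document; each statement's English description precedes it below -/
import Mathlib

section
/- Let G be a compactly generated t.d.l.c. group acting on a leafless tree T. Then the action is arc-geometric if and only if G has compact open arc stabilisers and preserves no proper subtree of T. Moreover, if the action is arc-geometric, then there exists a connected locally finite graph Γ with vertex set the set AT of arcs of T, on which G acts geometrically with respect to the graph metric, such that for every edge {a,b} of Γ either b is the reversal of a or o(a) = o(b). -/
open scoped Pointwise

section Prelim

variable (G : Type*) [Group G] [TopologicalSpace G]

/-- A topological group is compactly generated if it is generated by a compact subset. -/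
def CompactlyGeneratedGrp : Prop := ∃ S : Set G, IsCompact S ∧ Subgroup.closure S = ⊤

/-- G has no nontrivial compact normal subgroup. -/
def NoCompactNormal : Prop :=
  ∀ N : Subgroup G, N.Normal → IsCompact (N : Set G) → N = ⊥

variable {G}

/-- (K,U) is a TMS pair of G. -/
def IsTMSPair (K U : Subgroup G) : Prop :=
  IsCompact (U : Set G) ∧ IsOpen (U : Set G) ∧
  (∀ N : Subgroup G, N.Normal → IsCompact (N : Set G) → ∀ h : G,
    IsCompact (closure {g : G | (∀ k ∈ K, g * k * g⁻¹ ∈ (U : Set G) * (N : Set G)) ∧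
      ¬ ∀ k ∈ K, g * k * g⁻¹ ∈ (fun x => h * x * h⁻¹) '' (U : Set G)})) ∧
  (¬ IsCompact (closure {g : G | ∀ k ∈ K, g * k * g⁻¹ ∈ (U : Set G)})) ∧
  (∀ N : Subgroup G, N.Normal → IsCompact (N : Set G) → N.relIndex K = 0)

/-- K is a TMS subgroup of G. -/
def IsTMSSubgroup (K : Subgroup G) : Prop := ∃ U : Subgroup G, IsTMSPair K U

/-- g belongs to the quasi-centre of G, i.e. has open centraliser. -/
def InQuasiCentre (g : G) : Prop :=
  IsOpen ((Subgroup.centralizer {g} : Subgroup G) : Set G)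

/-- A subgroup is locally normal if its normaliser is open. -/
def IsLocallyNormal (H : Subgroup G) : Prop := IsOpen ((Subgroup.normalizer (H : Set G) : Subgroup G) : Set G)

variable (G)

/-- G is [A]-semisimple: trivial quasi-centre and no nontrivial abelian locally normal
subgroup. -/
def ASemisimple : Prop :=
  (∀ g : G, InQuasiCentre g → g = 1) ∧
  (∀ H : Subgroup G, IsLocallyNormal H → (∀ a ∈ H, ∀ b ∈ H, a * b = b * a) → H = ⊥)

variable {G}

/-- A compact open subgroup U is of finite quotient type if for each n ≥ 1 it has only
finitely many open normal subgroups of index n. -/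
def FiniteQuotientType (U : Subgroup G) : Prop :=
  ∀ n : ℕ, 0 < n →
    {N : Subgroup G | N ≤ U ∧ IsOpen (N : Set G) ∧ (∀ u ∈ U, ∀ x ∈ N, u * x * u⁻¹ ∈ N) ∧
      N.relIndex U = n}.Finite

variable (G)

/-- G is locally of finite quotient type. -/
def LocallyFiniteQuotientType : Prop :=
  ∀ U : Subgroup G, IsCompact (U : Set G) → IsOpen (U : Set G) → FiniteQuotientType U

variable {G}

/-- K is a local direct factor of G: a closed subgroup such that some open subgroup of G
splits as a topological direct product K × L. -/
def LocalDirectFactor (K : Subgroup G) : Prop :=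
  IsClosed (K : Set G) ∧
  ∃ L O : Subgroup G, IsClosed (L : Set G) ∧ IsOpen (O : Set G) ∧ K ≤ O ∧ L ≤ O ∧
    K ⊓ L = ⊥ ∧ (∀ k ∈ K, ∀ l ∈ L, k * l = l * k) ∧ (K : Set G) * (L : Set G) = (O : Set G)

end Prelim
section Graphs

open Set

variable {V : Type*} {T : SimpleGraph V}

/-- A subset of the vertices of a graph is bounded if it has finite diameter. -/
def BddSet (T : SimpleGraph V) (A : Set V) : Prop :=
  ∃ n : ℕ, ∀ w ∈ A, ∀ w' ∈ A, T.dist w w' ≤ n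

/-- The set of points outside A at distance at most d from A. -/
def sepSet (T : SimpleGraph V) (A : Set V) (d : ℕ) : Set V :=
  {p | p ∉ A ∧ ∃ q ∈ A, T.dist p q ≤ d}

/-- A is almost separated if δ_d A is bounded for every d. -/
def AlmostSep (T : SimpleGraph V) (A : Set V) : Prop := ∀ d : ℕ, BddSet T (sepSet T A d)

/-- An end of a graph: an ultrafilter on the Boolean algebra of almost separated sets
vanishing on the ideal of bounded sets, encoded by the collection of almost separated
sets it contains. -/
structure GraphEnd {V : Type*} (T : SimpleGraph V) where
  sets : Set (Set V)
  almostSep' : ∀ A ∈ sets, AlmostSep T A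
  not_bdd' : ∀ A ∈ sets, ¬ BddSet T A
  inter_mem' : ∀ A ∈ sets, ∀ B ∈ sets, A ∩ B ∈ sets
  mono' : ∀ A ∈ sets, ∀ B : Set V, AlmostSep T B → BddSet T (A \ B) → B ∈ sets
  total' : ∀ A : Set V, AlmostSep T A → A ∈ sets ∨ Aᶜ ∈ sets

/-- The Stone topology on the space of ends of a graph. -/
instance : TopologicalSpace (GraphEnd T) :=
  TopologicalSpace.generateFrom {S | ∃ A : Set V, S = {ξ : GraphEnd T | A ∈ ξ.sets}}

section MapLemmas

variable {e : V ≃ V}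

lemma bddSet_image (hd : ∀ u v, T.dist (e u) (e v) = T.dist u v)
    {A : Set V} (h : BddSet T A) : BddSet T (e '' A) := by
  obtain ⟨n, hn⟩ := h
  refine ⟨n, ?_⟩
  rintro w ⟨a, ha, rfl⟩ w' ⟨b, hb, rfl⟩
  rw [hd]; exact hn a ha b hb

lemma dist_symm_eq (hd : ∀ u v, T.dist (e u) (e v) = T.dist u v) :
    ∀ u v, T.dist (e.symm u) (e.symm v) = T.dist u v := by
  intro u v
  rw [← hd (e.symm u) (e.symm v), Equiv.apply_symm_apply, Equiv.apply_symm_apply]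

lemma sepSet_image (hd : ∀ u v, T.dist (e u) (e v) = T.dist u v) (A : Set V) (d : ℕ) :
    sepSet T (e '' A) d = e '' sepSet T A d := by
  ext p
  constructor
  · rintro ⟨hp, q, ⟨a, ha, rfl⟩, hq⟩
    refine ⟨e.symm p, ⟨fun hmem => hp ⟨e.symm p, hmem, e.apply_symm_apply p⟩, a, ha, ?_⟩,
      e.apply_symm_apply p⟩
    rw [← hd (e.symm p) a, e.apply_symm_apply]
    exact hq
  · rintro ⟨p, ⟨hp, q, hq, hpq⟩, rfl⟩
    refine ⟨fun hmem => ?_, ⟨e q, ⟨q, hq, rfl⟩, by rw [hd]; exact hpq⟩⟩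
    obtain ⟨a, ha, hae⟩ := hmem
    exact hp (by rwa [← e.injective hae])

lemma almostSep_image (hd : ∀ u v, T.dist (e u) (e v) = T.dist u v)
    {A : Set V} (h : AlmostSep T A) : AlmostSep T (e '' A) := by
  intro d
  rw [sepSet_image hd]
  exact bddSet_image hd (h d)

/-- The image of an end under a distance-preserving bijection of a graph. -/
def GraphEnd.mapEquiv (e : V ≃ V) (hd : ∀ u v, T.dist (e u) (e v) = T.dist u v)
    (ξ : GraphEnd T) : GraphEnd T where
  sets := (Set.image e) '' ξ.sets
  almostSep' := by
    rintro A ⟨B, hB, rfl⟩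
    exact almostSep_image hd (ξ.almostSep' B hB)
  not_bdd' := by
    rintro A ⟨B, hB, rfl⟩ hbdd
    refine ξ.not_bdd' B hB ?_
    have h2 := bddSet_image (e := e.symm) (dist_symm_eq hd) hbdd
    rwa [Equiv.symm_image_image] at h2
  inter_mem' := by
    rintro A ⟨B1, h1, rfl⟩ A' ⟨B2, h2, rfl⟩
    exact ⟨B1 ∩ B2, ξ.inter_mem' B1 h1 B2 h2, Set.image_inter e.injective⟩
  mono' := by
    rintro A ⟨B, hB, rfl⟩ C hC hbdd
    refine ⟨e.symm '' C, ?_, by rw [Equiv.image_symm_image]⟩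
    refine ξ.mono' B hB _ (almostSep_image (dist_symm_eq hd) hC) ?_
    have heq : B \ e.symm '' C = e.symm '' (e '' B \ C) := by
      rw [Set.image_diff e.symm.injective, Equiv.symm_image_image]
    rw [heq]
    exact bddSet_image (dist_symm_eq hd) hbdd
  total' := by
    intro A hA
    rcases ξ.total' (e.symm '' A) (almostSep_image (dist_symm_eq hd) hA) with h | h
    · exact Or.inl ⟨e.symm '' A, h, by rw [Equiv.image_symm_image]⟩
    · refine Or.inr ⟨(e.symm '' A)ᶜ, h, ?_⟩
      rw [← Set.image_compl_eq e.symm.bijective, Equiv.image_symm_image]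

end MapLemmas

section Actions

variable {G : Type*} [Group G]

/-- An action of a group on a graph by automorphisms, given by a homomorphism to the
permutations of the vertices preserving adjacency. -/
def GraphAction (T : SimpleGraph V) (φ : G →* Equiv.Perm V) : Prop :=
  ∀ (g : G) (u v : V), T.Adj u v → T.Adj (φ g u) (φ g v)

variable {φ : G →* Equiv.Perm V}

lemma GraphAction.adj_iff (hφ : GraphAction T φ) (g : G) {u v : V} :
    T.Adj (φ g u) (φ g v) ↔ T.Adj u v := by
  refine ⟨fun h => ?_, hφ g u v⟩
  have h2 := hφ g⁻¹ _ _ h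
  rwa [map_inv, Equiv.Perm.inv_def, Equiv.symm_apply_apply, Equiv.symm_apply_apply] at h2

/-- The graph isomorphism induced by a group element. -/
def GraphAction.iso (hφ : GraphAction T φ) (g : G) : T ≃g T :=
  { toEquiv := φ g, map_rel_iff' := fun {_ _} => hφ.adj_iff g }

lemma iso_dist_le (f : T ≃g T) (u v : V) : T.dist (f u) (f v) ≤ T.dist u v := by
  by_cases h : T.Reachable u v
  · obtain ⟨p, hp⟩ := h.exists_walk_length_eq_dist
    calc T.dist (f u) (f v) ≤ (p.map f.toHom).length := SimpleGraph.dist_le _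
    _ = p.length := by simp
    _ = T.dist u v := hp
  · rw [SimpleGraph.dist_eq_zero_of_not_reachable h,
      SimpleGraph.dist_eq_zero_of_not_reachable (fun hr => h (SimpleGraph.Iso.reachable_iff.mp hr))]

lemma GraphAction.dist_eq (hφ : GraphAction T φ) (g : G) (u v : V) :
    T.dist (φ g u) (φ g v) = T.dist u v := by
  refine le_antisymm (iso_dist_le (hφ.iso g) u v) ?_
  have h2 := iso_dist_le (hφ.iso g⁻¹) (φ g u) (φ g v)
  have he : ∀ w, (hφ.iso g⁻¹) (φ g w) = w := by
    intro w
    show φ g⁻¹ (φ g w) = w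
    rw [map_inv, Equiv.Perm.inv_def, Equiv.symm_apply_apply]
  rwa [he u, he v] at h2

/-- The action of a group element on the space of ends of a graph. -/
def endAct (φ : G →* Equiv.Perm V) (hφ : GraphAction T φ) (g : G) (ξ : GraphEnd T) :
    GraphEnd T :=
  GraphEnd.mapEquiv (φ g) (hφ.dist_eq g) ξ

/-- The set of elements acting trivially on the space of ends. -/
def endKernel (φ : G →* Equiv.Perm V) (hφ : GraphAction T φ) : Set G :=
  {g : G | ∀ ξ : GraphEnd T, endAct φ hφ g ξ = ξ}

/-- The rigid stabiliser of a subset of the space of ends: the pointwise fixator of its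
complement. -/
def ristEnds (φ : G →* Equiv.Perm V) (hφ : GraphAction T φ) (Y : Set (GraphEnd T)) : Set G :=
  {g : G | ∀ ξ : GraphEnd T, ξ ∉ Y → endAct φ hφ g ξ = ξ}

/-- The action on the space of ends is faithful. -/
def FaithfulOnEnds (φ : G →* Equiv.Perm V) (hφ : GraphAction T φ) : Prop :=
  ∀ g : G, (∀ ξ : GraphEnd T, endAct φ hφ g ξ = ξ) → g = 1

/-- The action on the space of ends is nondiscretely micro-supported: the rigid stabiliser
of every nonempty open set acts nontrivially, and the kernel of its action is not open
in it. -/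
def NondiscMicroSupportedOnEnds [TopologicalSpace G] (φ : G →* Equiv.Perm V)
    (hφ : GraphAction T φ) : Prop :=
  ∀ Y : Set (GraphEnd T), IsOpen Y → Y.Nonempty →
    (∃ g ∈ ristEnds φ hφ Y, ∃ ξ : GraphEnd T, endAct φ hφ g ξ ≠ ξ) ∧
    ¬ ∃ W : Set G, IsOpen W ∧
        endKernel φ hφ ∩ ristEnds φ hφ Y = W ∩ ristEnds φ hφ Y

/-- The action on the space of ends is extremely proximal: every compact proper subspace
is compressible. -/
def ExtremelyProximalOnEnds (φ : G →* Equiv.Perm V) (hφ : GraphAction T φ) : Prop :=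
  ∀ Y : Set (GraphEnd T), IsCompact Y → Y ≠ Set.univ →
    ∀ Z : Set (GraphEnd T), IsOpen Z → Z.Nonempty →
      ∃ g : G, endAct φ hφ g '' Y ⊆ Z

/-- A Cayley--Abels graph for G: connected, locally finite, vertex-transitive with compact
open vertex stabilisers. -/
def IsCayleyAbels [TopologicalSpace G] (T : SimpleGraph V) (φ : G →* Equiv.Perm V) : Prop :=
  GraphAction T φ ∧ T.Connected ∧ (∀ v : V, (T.neighborSet v).Finite) ∧
  (∀ u v : V, ∃ g : G, φ g u = v) ∧
  (∀ v : V, IsCompact {g : G | φ g v = v} ∧ IsOpen {g : G | φ g v = v})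

end Actions

/-- The half-tree associated to an arc (ordered pair of adjacent vertices). -/
def halfTree (T : SimpleGraph V) (p : V × V) : Set V :=
  {v : V | T.dist p.2 v < T.dist p.1 v}

/-- A geometric end: an end containing an infinite strictly descending sequence of
half-trees. -/
def IsGeometricEnd {T : SimpleGraph V} (ξ : GraphEnd T) : Prop :=
  ∃ f : ℕ → V × V, (∀ n, T.Adj (f n).1 (f n).2) ∧
    (∀ n, halfTree T (f (n + 1)) ⊆ halfTree T (f n) ∧
      halfTree T (f (n + 1)) ≠ halfTree T (f n)) ∧
    (∀ n, halfTree T (f n) ∈ ξ.sets)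

/-- A tree is leafless if every vertex has degree at least two. -/
def Leafless (T : SimpleGraph V) : Prop := ∀ v : V, (T.neighborSet v).Nontrivial

/-- The vertex set of a subtree: a nonempty convex set of vertices. -/
def IsSubtreeSet (T : SimpleGraph V) (S : Set V) : Prop :=
  S.Nonempty ∧ ∀ u ∈ S, ∀ v ∈ S, ∀ w : V, T.dist u w + T.dist w v = T.dist u v → w ∈ S

section TopActions

variable {G : Type*} [Group G] [TopologicalSpace G] {φ : G →* Equiv.Perm V}

/-- The action preserves no proper subtree. -/
def NoInvariantProperSubtree (T : SimpleGraph V) (φ : G →* Equiv.Perm V) : Prop :=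
  ∀ S : Set V, IsSubtreeSet T S → (∀ (g : G), ∀ v ∈ S, φ g v ∈ S) → S = Set.univ

/-- Arc stabilisers are compact open. -/
def CompactOpenArcStabs (T : SimpleGraph V) (φ : G →* Equiv.Perm V) : Prop :=
  ∀ p : V × V, T.Adj p.1 p.2 →
    IsCompact {g : G | φ g p.1 = p.1 ∧ φ g p.2 = p.2} ∧
    IsOpen {g : G | φ g p.1 = p.1 ∧ φ g p.2 = p.2}

/-- G has finitely many orbits of arcs. -/
def FinManyArcOrbits (T : SimpleGraph V) (φ : G →* Equiv.Perm V) : Prop :=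
  ∃ s : Set (V × V), s.Finite ∧
    ∀ p : V × V, T.Adj p.1 p.2 → ∃ q ∈ s, ∃ g : G, φ g q.1 = p.1 ∧ φ g q.2 = p.2

/-- The action on a leafless tree is arc-geometric: compact open arc stabilisers and
finitely many orbits of arcs. -/
def ArcGeometric (T : SimpleGraph V) (φ : G →* Equiv.Perm V) : Prop :=
  CompactOpenArcStabs T φ ∧ FinManyArcOrbits T φ

end TopActions

/-- A scale group: a compactly generated t.d.l.c. group admitting a faithful
vertex-transitive action on a locally finite leafless tree with compact open vertex
stabilisers, fixing exactly one end. -/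
def IsScaleGroup (G : Type u) [Group G] [TopologicalSpace G] : Prop :=
  ∃ (V : Type u) (T : SimpleGraph V) (φ : G →* Equiv.Perm V) (hφ : GraphAction T φ),
    T.IsTree ∧ Leafless T ∧ (∀ v : V, (T.neighborSet v).Finite) ∧
    Function.Injective φ ∧ (∀ u v : V, ∃ g : G, φ g u = v) ∧
    (∀ v : V, IsCompact {g : G | φ g v = v} ∧ IsOpen {g : G | φ g v = v}) ∧
    ∃! ξ : GraphEnd T, IsGeometricEnd ξ ∧ ∀ g : G, endAct φ hφ g ξ = ξ

end Graphs

/-- The type of arcs of a graph. -/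
def ArcType {V : Type*} (T : SimpleGraph V) : Type _ := {p : V × V // T.Adj p.1 p.2}

/-- The induced action of a group element on the arcs of a graph. -/
def arcMap {V : Type*} {T : SimpleGraph V} {G : Type*} [Group G]
    {φ : G →* Equiv.Perm V} (hφ : GraphAction T φ) (g : G) (a : ArcType T) : ArcType T :=
  ⟨(φ g a.1.1, φ g a.1.2), hφ g a.1.1 a.1.2 a.2⟩


/-!
Finitely many orbits of arcs keep every vertex within bounded distance of any nonempty invariant
set of vertices, whereas a proper subtree of a leafless tree has vertices arbitrarily far from it.

Conversely, let `G` be generated by a finite set `F` and an open stabiliser of a vertex `u₀`. The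
translates of paths from `u₀` to the `f u₀`, `f ∈ F`, span an invariant subgraph in which `u₀` is
joined to its whole orbit, so the component of `u₀` is invariant; like any connected subgraph of a
tree it is convex. By minimality it contains every vertex, and a connected subgraph of a tree is
the whole tree, so every edge is a translate of one of finitely many.

The graph on arcs joins an arc to its reversal, and two arcs with a common origin when some
translate of both has its endpoints in a fixed finite set `M` of vertices. Compact open arc
stabilisers make it locally finite and the action proper. Taking for `M` the vertices of walks that
join an arc `a₀`, its images under `F` and representatives of the arc orbits makes it connected,
and finitely many orbits make the action cocompact.
-/

namespace SimpleGraph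

variable {V : Type*} {T : SimpleGraph V} {u v w : V}

theorem Walk.dist_add_dist_of_mem_support {p : T.Walk u v} (hp : p.length = T.dist u v)
    (hw : w ∈ p.support) : T.dist u w + T.dist w v = T.dist u v := by
  classical
  have h₁ := length_eq_dist_of_subwalk hp (p.isSubwalk_takeUntil hw)
  have h₂ := length_eq_dist_of_subwalk hp (p.isSubwalk_dropUntil hw)
  have h₃ := congrArg Walk.length (p.take_spec hw)
  rw [Walk.length_append] at h₃
  omega

theorem IsAcyclic.support_subset_of_isPath (hT : T.IsAcyclic) {p : T.Walk u v} (hp : p.IsPath)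
    (q : T.Walk u v) : p.support ⊆ q.support := by
  classical
  have : p = q.bypass :=
    congrArg Subtype.val ((hT.subsingleton_path u v).elim ⟨p, hp⟩ ⟨_, q.bypass_isPath⟩)
  exact this ▸ q.support_bypass_subset_support

theorem IsTree.mem_support_of_dist_add_dist (hT : T.IsTree)
    (h : T.dist u w + T.dist w v = T.dist u v) (q : T.Walk u v) : w ∈ q.support := by
  obtain ⟨p₁, hp₁⟩ := hT.connected.exists_walk_length_eq_dist u w
  obtain ⟨p₂, hp₂⟩ := hT.connected.exists_walk_length_eq_dist w v
  have hp : (p₁.append p₂).IsPath :=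
    Walk.isPath_of_length_eq_dist _ (by rw [Walk.length_append, hp₁, hp₂, h])
  exact hT.isAcyclic.support_subset_of_isPath hp q
    ((Walk.mem_support_append_iff _ _).2 (.inl p₁.end_mem_support))

theorem IsTree.dist_add_dist_of_adj_of_adj (hT : T.IsTree) {a b w₁ w₂ : V} (h₁ : T.Adj v w₁)
    (h₂ : T.Adj v w₂) (hne : w₁ ≠ w₂) (ha : T.dist w₁ a ≤ T.dist v a)
    (hb : T.dist w₂ b ≤ T.dist v b) : T.dist a v + T.dist v b = T.dist a b := by
  obtain ⟨q, hq⟩ := hT.connected.exists_walk_length_eq_dist a b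
  refine q.dist_add_dist_of_mem_support hq ?_
  obtain ⟨p₁, hp₁⟩ := hT.connected.exists_walk_length_eq_dist w₁ a
  obtain ⟨p₂, hp₂⟩ := hT.connected.exists_walk_length_eq_dist w₂ b
  have hv₁ : v ∉ p₁.support := fun hv => by
    have := p₁.dist_add_dist_of_mem_support hp₁ hv
    rw [dist_eq_one_iff_adj.2 h₁.symm] at this
    omega
  have hv₂ : v ∉ p₂.support := fun hv => by
    have := p₂.dist_add_dist_of_mem_support hp₂ hv
    rw [dist_eq_one_iff_adj.2 h₂.symm] at this
    omega
  have hpath : (Walk.cons h₁.symm (Walk.cons h₂ Walk.nil)).IsPath := by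
    simp [h₂.ne, hne, h₁.ne.symm]
  have hv := hT.isAcyclic.support_subset_of_isPath hpath (p₁.append (q.append p₂.reverse))
    (show v ∈ (Walk.cons h₁.symm (Walk.cons h₂ Walk.nil)).support by simp)
  simp only [Walk.mem_support_append_iff, Walk.support_reverse, List.mem_reverse] at hv
  tauto

theorem IsTree.isSubtreeSet_setOf_reachable (hT : T.IsTree) {T' : SimpleGraph V} (hle : T' ≤ T)
    (u₀ : V) : IsSubtreeSet T {v | T'.Reachable u₀ v} := by
  classical
  refine ⟨⟨u₀, .rfl⟩, fun u hu v hv w hw => ?_⟩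
  obtain ⟨q⟩ := hu.symm.trans hv
  have hwq : w ∈ q.support := by
    simpa using hT.mem_support_of_dist_add_dist hw (q.mapLe hle)
  exact hu.trans ⟨q.takeUntil w hwq⟩

theorem Connected.exists_finite_superset_walks (hT : T.Connected) {Y : Set V} (hY : Y.Finite) :
    ∃ M : Set V, M.Finite ∧ Y ⊆ M ∧
      ∀ x ∈ M, ∀ y ∈ M, ∃ p : T.Walk x y, ∀ z ∈ p.support, z ∈ M := by
  classical
  obtain ⟨u₀⟩ := hT.nonempty
  have walk (y : V) : T.Walk u₀ y := (hT.preconnected u₀ y).some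
  set M := ⋃ y ∈ Y, {z | z ∈ (walk y).support}
  have hprefix (x) (hx : x ∈ M) : ∃ p : T.Walk u₀ x, ∀ z ∈ p.support, z ∈ M := by
    obtain ⟨y, hy, hxy⟩ := Set.mem_iUnion₂.1 hx
    exact ⟨(walk y).takeUntil x hxy,
      fun z hz => Set.mem_biUnion hy ((walk y).support_takeUntil_subset_support hxy hz)⟩
  refine ⟨M, hY.biUnion fun y _ => (walk y).support.finite_toSet,
    fun y hy => Set.mem_biUnion hy (walk y).end_mem_support, fun x hx y hy => ?_⟩
  obtain ⟨p, hp⟩ := hprefix x hx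
  obtain ⟨q, hq⟩ := hprefix y hy
  refine ⟨p.reverse.append q, fun z hz => ?_⟩
  rw [Walk.mem_support_append_iff, Walk.support_reverse, List.mem_reverse] at hz
  exact hz.elim (hp z) (hq z)

theorem Connected.finite_setOf_dist_le (hT : T.Connected) (hlf : ∀ v, (T.neighborSet v).Finite)
    (u : V) (n : ℕ) : {v | T.dist u v ≤ n}.Finite := by
  induction n with
  | zero => simp [hT.dist_eq_zero_iff]
  | succ n ih =>
    refine (ih.union (ih.biUnion fun v _ => hlf v)).subset fun w hw => ?_
    rcases Nat.lt_or_ge (T.dist u w) (n + 1) with h | h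
    · exact .inl (Nat.lt_succ_iff.1 h)
    obtain ⟨p, hp⟩ := hT.exists_walk_length_eq_dist w u
    cases p with
    | nil => simp at h
    | cons hwz q =>
      refine .inr (Set.mem_biUnion (?_ : T.dist u _ ≤ n) hwz.symm)
      change T.dist u w ≤ n + 1 at hw
      rw [Walk.length_cons, dist_comm] at hp
      rw [dist_comm]
      have := dist_le q
      omega

end SimpleGraph

section Subtrees

variable {V : Type*} {T : SimpleGraph V} {S : Set V}

theorem IsSubtreeSet.exists_adj_forall_dist_lt (hS : IsSubtreeSet T S) (hT : T.IsTree)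
    (hleaf : Leafless T) {v : V} (hv : v ∉ S) :
    ∃ w, T.Adj v w ∧ ∀ s ∈ S, T.dist v s < T.dist w s := by
  obtain ⟨w₁, hw₁, w₂, hw₂, hne⟩ := hleaf v
  by_contra! h
  obtain ⟨s₁, hs₁, h₁⟩ := h w₁ hw₁
  obtain ⟨s₂, hs₂, h₂⟩ := h w₂ hw₂
  exact hv (hS.2 s₁ hs₁ s₂ hs₂ v (hT.dist_add_dist_of_adj_of_adj hw₁ hw₂ hne h₁ h₂))

theorem IsSubtreeSet.exists_forall_le_dist (hS : IsSubtreeSet T S) (hT : T.IsTree)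
    (hleaf : Leafless T) (hne : S ≠ Set.univ) (n : ℕ) :
    ∃ x ∉ S, ∀ s ∈ S, n ≤ T.dist x s := by
  induction n with
  | zero =>
    obtain ⟨x, hx⟩ := (Set.ne_univ_iff_exists_notMem S).1 hne
    exact ⟨x, hx, fun _ _ => Nat.zero_le _⟩
  | succ n ih =>
    obtain ⟨x, hx, hxn⟩ := ih
    obtain ⟨w, -, hw⟩ := hS.exists_adj_forall_dist_lt hT hleaf hx
    refine ⟨w, fun hwS => ?_, fun s hs => (hxn s hs).trans_lt (hw s hs)⟩
    simpa using hw w hwS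

end Subtrees

section GroupActions

variable {G : Type*} [Group G] {X : Type*} {ψ : G →* Equiv.Perm X}

theorem setOf_apply_eq_eq_smul {x y : X} {g₀ : G} (hg₀ : ψ g₀ x = y) :
    {g | ψ g x = y} = g₀ • {g | ψ g x = x} := by
  ext g
  rw [Set.mem_smul_set_iff_inv_smul_mem]
  simp [← hg₀, Equiv.symm_apply_eq]

variable {Γ : SimpleGraph X}

theorem GraphAction.reachable_apply (hψ : GraphAction Γ ψ) (g : G) {a b : X}
    (h : Γ.Reachable a b) : Γ.Reachable (ψ g a) (ψ g b) :=
  h.map (hψ.iso g).toHom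

theorem GraphAction.reachable_apply_of_closure_eq_top (hψ : GraphAction Γ ψ) {S : Set G}
    (hS : Subgroup.closure S = ⊤) {a : X} (ha : ∀ s ∈ S, Γ.Reachable a (ψ s a)) (g : G) :
    Γ.Reachable a (ψ g a) := by
  induction (hS ▸ Subgroup.mem_top g : g ∈ Subgroup.closure S)
    using Subgroup.closure_induction with
  | mem s hs => exact ha s hs
  | one => simp
  | mul g h _ _ hg hh => simpa [Equiv.Perm.mul_apply] using hg.trans (hψ.reachable_apply g hh)
  | inv g _ hg => simpa using (hψ.reachable_apply g⁻¹ hg).symm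

theorem GraphAction.exists_forall_dist_apply_le (hψ : GraphAction Γ ψ) {A : Set X}
    (hA : A.Finite) (hrep : ∀ a, ∃ r ∈ A, ∃ g, ψ g r = a) :
    ∃ n : ℕ, ∀ a b, ∃ g, Γ.dist a (ψ g b) ≤ n := by
  obtain ⟨n, hn⟩ := ((hA.prod hA).image fun p => Γ.dist p.1 p.2).bddAbove
  refine ⟨n, fun a b => ?_⟩
  obtain ⟨r, hr, g, rfl⟩ := hrep a
  obtain ⟨r', hr', g', rfl⟩ := hrep b
  refine ⟨g * g'⁻¹, ?_⟩
  have : ψ (g * g'⁻¹) (ψ g' r') = ψ g r' := by simp [Equiv.Perm.mul_apply]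
  rw [this, hψ.dist_eq]
  exact hn ⟨(r, r'), ⟨hr, hr'⟩, rfl⟩

variable [TopologicalSpace G]

theorem setOf_dist_apply_le_mem_nhds_one {a : X} (ha : IsOpen {g | ψ g a = a}) (n : ℕ) :
    {g | Γ.dist a (ψ g a) ≤ n} ∈ nhds (1 : G) :=
  Filter.mem_of_superset (ha.mem_nhds (by simp)) fun _ (hg : ψ _ a = a) => by simp [hg]

variable [IsTopologicalGroup G]

theorem CompactlyGeneratedGrp.exists_finset_closure_union_eq_top (hG : CompactlyGeneratedGrp G)
    {U : Set G} (hU : IsOpen U) (h1 : (1 : G) ∈ U) :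
    ∃ F : Finset G, Subgroup.closure ((F : Set G) ∪ U) = ⊤ := by
  obtain ⟨S, hS, hSgen⟩ := hG
  obtain ⟨F, hF⟩ := hS.elim_finite_subcover (fun g : G => g • U) (fun g => hU.smul g)
    fun s _ => Set.mem_iUnion.2 ⟨s, 1, h1, mul_one s⟩
  refine ⟨F, eq_top_iff.2 (hSgen ▸ (Subgroup.closure_le _).2 fun s hs => ?_)⟩
  obtain ⟨f, hf, u, hu, rfl⟩ := Set.mem_iUnion₂.1 (hF hs)
  exact mul_mem (Subgroup.subset_closure (.inl hf)) (Subgroup.subset_closure (.inr hu))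

theorem isOpen_setOf_apply_eq {x : X} (hx : IsOpen {g | ψ g x = x}) (y : X) :
    IsOpen {g | ψ g x = y} := by
  rcases Set.eq_empty_or_nonempty {g | ψ g x = y} with h | ⟨g₀, hg₀⟩
  · exact h ▸ isOpen_empty
  · exact setOf_apply_eq_eq_smul hg₀ ▸ hx.smul g₀

theorem isCompact_setOf_apply_eq {x : X} (hx : IsCompact {g | ψ g x = x}) (y : X) :
    IsCompact {g | ψ g x = y} := by
  rcases Set.eq_empty_or_nonempty {g | ψ g x = y} with h | ⟨g₀, hg₀⟩
  · exact h ▸ isCompact_empty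
  · exact setOf_apply_eq_eq_smul hg₀ ▸ hx.smul g₀

theorem IsCompact.finite_image_apply {K : Set G} (hK : IsCompact K) {x : X}
    (hx : IsOpen {g | ψ g x = x}) : ((fun g => ψ g x) '' K).Finite := by
  let _ : TopologicalSpace X := ⊥
  have : DiscreteTopology X := ⟨rfl⟩
  exact (hK.image (continuous_discrete_rng.2 (isOpen_setOf_apply_eq hx))).finite_of_discrete

theorem isCompact_closure_setOf_dist_apply_le (hΓ : Γ.Connected)
    (hlf : ∀ a, (Γ.neighborSet a).Finite) {a : X} (ha : IsCompact {g | ψ g a = a}) (n : ℕ) :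
    IsCompact (closure {g | Γ.dist a (ψ g a) ≤ n}) :=
  IsCompact.closure_of_subset
    ((hΓ.finite_setOf_dist_le hlf a n).isCompact_biUnion fun b _ => isCompact_setOf_apply_eq ha b)
    fun _ hg => Set.mem_biUnion hg rfl

end GroupActions

section TreeActions

open SimpleGraph

variable {V : Type*} {T : SimpleGraph V} {G : Type*} [Group G] {φ : G →* Equiv.Perm V}

theorem FinManyArcOrbits.noInvariantProperSubtree (h : FinManyArcOrbits T φ) (hT : T.IsTree)
    (hleaf : Leafless T) (hφ : GraphAction T φ) : NoInvariantProperSubtree T φ := by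
  intro S hS hinv
  by_contra hne
  obtain ⟨R, hR, hrep⟩ := h
  obtain ⟨s₀, hs₀⟩ := hS.1
  obtain ⟨N, hN⟩ := (hR.image fun q => T.dist q.1 s₀).bddAbove
  obtain ⟨x, -, hx⟩ := hS.exists_forall_le_dist hT hleaf hne (N + 1)
  obtain ⟨y, hy, -⟩ := hleaf x
  obtain ⟨q, hq, g, hgx, -⟩ := hrep (x, y) hy
  change φ g q.1 = x at hgx
  have hfar := hx (φ g s₀) (hinv g s₀ hs₀)
  rw [← hgx, hφ.dist_eq] at hfar
  have := hN (Set.mem_image_of_mem _ hq)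
  omega

def orbitEdgeGraph (φ : G →* Equiv.Perm V) (E : Set (Sym2 V)) : SimpleGraph V :=
  fromEdgeSet {e | ∃ g, e.map (φ g) ∈ E}

theorem orbitEdgeGraph_adj {E : Set (Sym2 V)} {x y : V} :
    (orbitEdgeGraph φ E).Adj x y ↔ (∃ g, s(φ g x, φ g y) ∈ E) ∧ x ≠ y := by
  simp [orbitEdgeGraph]

theorem orbitEdgeGraph_le (hφ : GraphAction T φ) {E : Set (Sym2 V)} (hE : E ⊆ T.edgeSet) :
    orbitEdgeGraph φ E ≤ T := fun x y h => by
  obtain ⟨⟨g, hg⟩, -⟩ := orbitEdgeGraph_adj.1 h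
  exact (hφ.adj_iff g).1 (hE hg)

theorem graphAction_orbitEdgeGraph (E : Set (Sym2 V)) : GraphAction (orbitEdgeGraph φ E) φ := by
  intro h x y hxy
  obtain ⟨⟨g, hg⟩, hne⟩ := orbitEdgeGraph_adj.1 hxy
  refine orbitEdgeGraph_adj.2 ⟨⟨g * h⁻¹, ?_⟩, (φ h).injective.ne hne⟩
  simpa [Equiv.Perm.mul_apply] using hg

variable [TopologicalSpace G] [IsTopologicalGroup G]

theorem NoInvariantProperSubtree.finManyArcOrbits (hmin : NoInvariantProperSubtree T φ)
    (hG : CompactlyGeneratedGrp G) (hT : T.IsTree) (hφ : GraphAction T φ) {u₀ : V}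
    (hu₀ : IsOpen {g : G | φ g u₀ = u₀}) : FinManyArcOrbits T φ := by
  obtain ⟨F, hF⟩ := hG.exists_finset_closure_union_eq_top hu₀ (by simp)
  have walk (f : G) : T.Walk u₀ (φ f u₀) := (hT.connected.preconnected _ _).some
  set E : Set (Sym2 V) := ⋃ f ∈ F, {e | e ∈ (walk f).edges}
  set M : Set V := ⋃ f ∈ F, {v | v ∈ (walk f).support}
  set T' := orbitEdgeGraph φ E
  have hle : T' ≤ T :=
    orbitEdgeGraph_le hφ <| Set.iUnion₂_subset fun f _ => (walk f).edges_subset_edgeSet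
  have hT' := graphAction_orbitEdgeGraph (φ := φ) E
  have hgen : ∀ g, T'.Reachable u₀ (φ g u₀) := by
    refine hT'.reachable_apply_of_closure_eq_top hF ?_
    rintro s (hs | hs)
    · refine ⟨(walk s).transfer T' fun e he => ?_⟩
      simp only [T', orbitEdgeGraph, edgeSet_fromEdgeSet]
      exact ⟨⟨1, by simpa [E] using ⟨s, hs, he⟩⟩,
        T.not_isDiag_of_mem_edgeSet ((walk s).edges_subset_edgeSet he)⟩
    · rw [show φ s u₀ = u₀ from hs]
  have hC : {v | T'.Reachable u₀ v} = Set.univ :=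
    hmin _ (hT.isSubtreeSet_setOf_reachable hle u₀) fun g v hv =>
      (hgen g).trans (hT'.reachable_apply g hv)
  have hconn : T'.Connected := (connected_iff_exists_forall_reachable _).2
    ⟨u₀, fun v => Set.eq_univ_iff_forall.1 hC v⟩
  have hT'T : T' = T := (isTree_iff_minimal_connected.1 hT).eq_of_le hconn hle
  refine ⟨M ×ˢ M, ?_, fun p hp => ?_⟩
  · have hM : M.Finite := F.finite_toSet.biUnion fun f _ => (walk f).support.finite_toSet
    exact hM.prod hM
  · obtain ⟨⟨g, hg⟩, -⟩ := orbitEdgeGraph_adj.1 (hT'T ▸ hp : T'.Adj p.1 p.2)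
    obtain ⟨f, hf, he⟩ := Set.mem_iUnion₂.1 hg
    refine ⟨(φ g p.1, φ g p.2), ⟨Set.mem_biUnion hf ((walk f).fst_mem_support_of_mem_edges he),
      Set.mem_biUnion hf ((walk f).snd_mem_support_of_mem_edges he)⟩, g⁻¹, ?_⟩
    simp

theorem CompactOpenArcStabs.isOpen_setOf_apply_eq_self (h : CompactOpenArcStabs T φ) {u v : V}
    (huv : T.Adj u v) : IsOpen {g : G | φ g u = u} := by
  refine isOpen_iff_forall_mem_open.2 fun g (hg : φ g u = u) =>
    ⟨g • {k | φ k u = u ∧ φ k v = v}, ?_, (h (u, v) huv).2.smul g, ⟨1, by simp, mul_one g⟩⟩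
  rintro _ ⟨k, hk, rfl⟩
  simp [Equiv.Perm.mul_apply, hk.1, hg]

end TreeActions

section Arcs

open SimpleGraph

variable {V : Type*} {T : SimpleGraph V} {G : Type*} [Group G] {φ : G →* Equiv.Perm V}

theorem ArcType.ext_iff {a b : ArcType T} : a = b ↔ a.1.1 = b.1.1 ∧ a.1.2 = b.1.2 :=
  Subtype.ext_iff.trans Prod.ext_iff

theorem arcMap_mul (hφ : GraphAction T φ) (g h : G) (a : ArcType T) :
    arcMap hφ (g * h) a = arcMap hφ g (arcMap hφ h a) :=
  ArcType.ext_iff.2 (by simp [arcMap, Equiv.Perm.mul_apply])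

theorem arcMap_one (hφ : GraphAction T φ) (a : ArcType T) : arcMap hφ 1 a = a :=
  ArcType.ext_iff.2 (by simp [arcMap])

def arcPerm (hφ : GraphAction T φ) : G →* Equiv.Perm (ArcType T) where
  toFun g := ⟨arcMap hφ g, arcMap hφ g⁻¹, fun a => by simp [← arcMap_mul, arcMap_one],
    fun a => by simp [← arcMap_mul, arcMap_one]⟩
  map_one' := Equiv.ext (arcMap_one hφ)
  map_mul' g h := Equiv.ext (arcMap_mul hφ g h)

variable (hφ : GraphAction T φ)

theorem setOf_arcPerm_apply_eq_self (a : ArcType T) :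
    {g | arcPerm hφ g a = a} = {g | φ g a.1.1 = a.1.1 ∧ φ g a.1.2 = a.1.2} := by
  ext g
  exact ArcType.ext_iff

theorem FinManyArcOrbits.exists_finite_arcs (h : FinManyArcOrbits T φ) :
    ∃ A : Set (ArcType T), A.Finite ∧ ∀ a, ∃ r ∈ A, ∃ g, arcPerm hφ g r = a := by
  obtain ⟨R, hR, hrep⟩ := h
  refine ⟨Subtype.val ⁻¹' R, hR.preimage Subtype.val_injective.injOn, fun a => ?_⟩
  obtain ⟨q, hq, g, h₁, h₂⟩ := hrep a.1 a.2
  have hq' : T.Adj q.1 q.2 := (hφ.adj_iff g).1 (h₁ ▸ h₂ ▸ a.2)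
  exact ⟨⟨q, hq'⟩, hq, g, ArcType.ext_iff.2 ⟨h₁, h₂⟩⟩

def arcGraph (M : Set V) : SimpleGraph (ArcType T) where
  Adj a b := a ≠ b ∧ ((b.1.1 = a.1.2 ∧ b.1.2 = a.1.1) ∨
    (a.1.1 = b.1.1 ∧ ∃ g : G, (arcPerm hφ g a).1 ∈ M ×ˢ M ∧ (arcPerm hφ g b).1 ∈ M ×ˢ M))
  symm := ⟨by
    rintro a b ⟨hne, ⟨h₁, h₂⟩ | ⟨h, g, ha, hb⟩⟩
    exacts [⟨hne.symm, .inl ⟨h₂.symm, h₁.symm⟩⟩, ⟨hne.symm, .inr ⟨h.symm, g, hb, ha⟩⟩]⟩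
  loopless := ⟨fun _ h => h.1 rfl⟩

theorem graphAction_arcGraph (M : Set V) : GraphAction (arcGraph hφ M) (arcPerm hφ) := by
  rintro h a b ⟨hne, ⟨h₁, h₂⟩ | ⟨ho, g, ha, hb⟩⟩
  · exact ⟨(arcPerm hφ h).injective.ne hne, .inl ⟨congrArg (φ h) h₁, congrArg (φ h) h₂⟩⟩
  · refine ⟨(arcPerm hφ h).injective.ne hne, .inr ⟨congrArg (φ h) ho, g * h⁻¹, ?_, ?_⟩⟩ <;>
      simpa [Equiv.Perm.mul_apply]

variable {M : Set V}

theorem arcGraph_reachable_of_fst_eq {a b : ArcType T} (ha : a.1 ∈ M ×ˢ M) (hb : b.1 ∈ M ×ˢ M)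
    (h : a.1.1 = b.1.1) : (arcGraph hφ M).Reachable a b := by
  by_cases hab : a = b
  · exact hab ▸ .rfl
  · exact Adj.reachable ⟨hab, .inr ⟨h, 1, by simpa, by simpa⟩⟩

theorem arcGraph_reachable_of_walk {u v : V} (p : T.Walk u v) (hp : ∀ z ∈ p.support, z ∈ M)
    {a b : ArcType T} (ha : a.1 ∈ M ×ˢ M) (hb : b.1 ∈ M ×ˢ M) (hau : a.1.1 = u)
    (hbv : b.1.1 = v) : (arcGraph hφ M).Reachable a b := by
  induction p generalizing a with
  | nil => exact arcGraph_reachable_of_fst_eq hφ ha hb (hau.trans hbv.symm)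
  | @cons u z v h p ih =>
    let out : ArcType T := ⟨(u, z), h⟩
    let back : ArcType T := ⟨(z, u), h.symm⟩
    have hout : out.1 ∈ M ×ˢ M := ⟨hp u (by simp), hp z (by simp)⟩
    have hback : back.1 ∈ M ×ˢ M := ⟨hout.2, hout.1⟩
    have hadj : (arcGraph hφ M).Adj out back :=
      ⟨fun e => h.ne (congrArg (fun a : ArcType T => a.1.1) e), .inl ⟨rfl, rfl⟩⟩
    exact (arcGraph_reachable_of_fst_eq hφ ha hout hau).trans <| hadj.reachable.trans <|
      ih (fun w hw => hp w (by simp [hw])) hback rfl hbv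

variable [TopologicalSpace G] [IsTopologicalGroup G]

theorem CompactOpenArcStabs.finite_neighborSet_arcGraph (h : CompactOpenArcStabs T φ)
    (hM : M.Finite) (a : ArcType T) : ((arcGraph hφ M).neighborSet a).Finite := by
  set R : Set (ArcType T) := Subtype.val ⁻¹' (M ×ˢ M)
  have hR : R.Finite := (hM.prod hM).preimage Subtype.val_injective.injOn
  have hstab (r : ArcType T) : IsOpen {g | arcPerm hφ g r = r} :=
    setOf_arcPerm_apply_eq_self hφ r ▸ (h r.1 r.2).2
  have hmove (r : ArcType T) : IsCompact {g | arcPerm hφ g r = a} :=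
    isCompact_setOf_apply_eq (setOf_arcPerm_apply_eq_self hφ r ▸ (h r.1 r.2).1) a
  have hrev : {b : ArcType T | b.1.1 = a.1.2 ∧ b.1.2 = a.1.1}.Finite :=
    Set.Subsingleton.finite fun b hb c hc =>
      ArcType.ext_iff.2 ⟨hb.1.trans hc.1.symm, hb.2.trans hc.2.symm⟩
  refine (hrev.union (hR.biUnion fun r _ => hR.biUnion fun r' _ =>
    (hmove r).finite_image_apply (hstab r'))).subset ?_
  rintro b ⟨-, hrev | ⟨-, g, ha, hb⟩⟩
  · exact .inl hrev
  · refine .inr (Set.mem_biUnion ha (Set.mem_biUnion hb ⟨g⁻¹, ?_, ?_⟩)) <;> simp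

theorem CompactlyGeneratedGrp.exists_connected_arcGraph (hG : CompactlyGeneratedGrp G)
    (hT : T.Connected) {a₀ : ArcType T} (ha₀ : IsOpen {g | arcPerm hφ g a₀ = a₀})
    {A : Set (ArcType T)} (hA : A.Finite) (hrep : ∀ a, ∃ r ∈ A, ∃ g, arcPerm hφ g r = a) :
    ∃ M : Set V, M.Finite ∧ (arcGraph hφ M).Connected := by
  obtain ⟨F, hF⟩ := hG.exists_finset_closure_union_eq_top ha₀ (by simp)
  set X : Set (ArcType T) := insert a₀ ((fun f => arcPerm hφ f a₀) '' F ∪ A)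
  have hX : X.Finite := ((F.finite_toSet.image _).union hA).insert a₀
  obtain ⟨M, hM, hXM, hwalk⟩ :=
    hT.exists_finite_superset_walks (hX.biUnion fun x _ => Set.toFinite {x.1.1, x.1.2})
  have hin (x) (hx : x ∈ X) : x.1 ∈ M ×ˢ M :=
    ⟨hXM (Set.mem_biUnion hx (by simp)), hXM (Set.mem_biUnion hx (by simp))⟩
  have hreach (x) (hx : x ∈ X) (y) (hy : y ∈ X) : (arcGraph hφ M).Reachable x y := by
    obtain ⟨p, hp⟩ := hwalk _ (hin x hx).1 _ (hin y hy).1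
    exact arcGraph_reachable_of_walk hφ p hp (hin x hx) (hin y hy) rfl rfl
  have horbit : ∀ g, (arcGraph hφ M).Reachable a₀ (arcPerm hφ g a₀) := by
    refine (graphAction_arcGraph hφ M).reachable_apply_of_closure_eq_top hF ?_
    rintro s (hs | hs)
    · exact hreach _ (.inl rfl) _ (.inr (.inl ⟨s, hs, rfl⟩))
    · rw [show arcPerm hφ s a₀ = a₀ from hs]
  refine ⟨M, hM, (connected_iff_exists_forall_reachable _).2 ⟨a₀, fun a => ?_⟩⟩
  obtain ⟨r, hr, g, rfl⟩ := hrep a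
  exact (horbit g).trans <|
    (graphAction_arcGraph hφ M).reachable_apply g (hreach _ (.inl rfl) _ (.inr (.inr hr)))

end Arcs

theorem arc_geometric_characterisation_general {G : Type*} [Group G] [TopologicalSpace G]
    [IsTopologicalGroup G]
    (hcg : CompactlyGeneratedGrp G)
    {V : Type*} (T : SimpleGraph V) (htree : T.IsTree) (hleafless : Leafless T)
    (φ : G →* Equiv.Perm V) (hφ : GraphAction T φ) :
    (ArcGeometric T φ ↔ (CompactOpenArcStabs T φ ∧ NoInvariantProperSubtree T φ)) ∧
    (ArcGeometric T φ →
      ∃ Γ : SimpleGraph (ArcType T),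
        Γ.Connected ∧ (∀ a : ArcType T, (Γ.neighborSet a).Finite) ∧
        (∀ (g : G) (a b : ArcType T), Γ.Adj a b → Γ.Adj (arcMap hφ g a) (arcMap hφ g b)) ∧
        (∀ (a : ArcType T) (n : ℕ),
          {g : G | Γ.dist a (arcMap hφ g a) ≤ n} ∈ nhds (1 : G) ∧
          IsCompact (closure {g : G | Γ.dist a (arcMap hφ g a) ≤ n})) ∧
        (∃ n : ℕ, ∀ a b : ArcType T, ∃ g : G, Γ.dist a (arcMap hφ g b) ≤ n) ∧
        (∀ a b : ArcType T, Γ.Adj a b →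
          (b.1.1 = a.1.2 ∧ b.1.2 = a.1.1) ∨ a.1.1 = b.1.1)) := by
  obtain ⟨u₀⟩ := htree.connected.nonempty
  obtain ⟨v₀, hv₀, -⟩ := hleafless u₀
  have hstab (hst : CompactOpenArcStabs T φ) (a : ArcType T) :
      IsCompact {g | arcPerm hφ g a = a} ∧ IsOpen {g | arcPerm hφ g a = a} :=
    setOf_arcPerm_apply_eq_self hφ a ▸ hst a.1 a.2
  refine ⟨⟨fun h => ⟨h.1, h.2.noInvariantProperSubtree htree hleafless hφ⟩,
    fun ⟨hst, hmin⟩ => ⟨hst, hmin.finManyArcOrbits hcg htree hφ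
      (hst.isOpen_setOf_apply_eq_self hv₀)⟩⟩, fun ⟨hst, horb⟩ => ?_⟩
  obtain ⟨A, hA, hrep⟩ := horb.exists_finite_arcs hφ
  obtain ⟨M, hM, hconn⟩ := hcg.exists_connected_arcGraph hφ htree.connected
    (hstab hst ⟨(u₀, v₀), hv₀⟩).2 hA hrep
  have hlf := hst.finite_neighborSet_arcGraph hφ hM
  exact ⟨arcGraph hφ M, hconn, hlf, graphAction_arcGraph hφ M,
    fun a n => ⟨setOf_dist_apply_le_mem_nhds_one (hstab hst a).2 n,
      isCompact_closure_setOf_dist_apply_le hconn hlf (hstab hst a).1 n⟩,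
    (graphAction_arcGraph hφ M).exists_forall_dist_apply_le hA hrep,
    fun a b ⟨_, h⟩ => h.imp_right And.left⟩

/-- Lemma 3.2: an action of a compactly generated t.d.l.c. group on a leafless tree is
arc-geometric iff it has compact open arc stabilisers and preserves no proper subtree;
moreover an arc-geometric action yields a G-metric graph structure on the set of arcs in
which adjacent arcs are either mutually inverse or share their origin. -/
theorem arc_geometric_characterisation {G : Type*} [Group G] [TopologicalSpace G]
    [IsTopologicalGroup G] [LocallyCompactSpace G] [TotallyDisconnectedSpace G] [T2Space G]
    (hcg : CompactlyGeneratedGrp G)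
    {V : Type*} (T : SimpleGraph V) (htree : T.IsTree) (hleafless : Leafless T)
    (φ : G →* Equiv.Perm V) (hφ : GraphAction T φ) :
    (ArcGeometric T φ ↔ (CompactOpenArcStabs T φ ∧ NoInvariantProperSubtree T φ)) ∧
    (ArcGeometric T φ →
      ∃ Γ : SimpleGraph (ArcType T),
        Γ.Connected ∧ (∀ a : ArcType T, (Γ.neighborSet a).Finite) ∧
        (∀ (g : G) (a b : ArcType T), Γ.Adj a b → Γ.Adj (arcMap hφ g a) (arcMap hφ g b)) ∧
        (∀ (a : ArcType T) (n : ℕ),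
          {g : G | Γ.dist a (arcMap hφ g a) ≤ n} ∈ nhds (1 : G) ∧
          IsCompact (closure {g : G | Γ.dist a (arcMap hφ g a) ≤ n})) ∧
        (∃ n : ℕ, ∀ a b : ArcType T, ∃ g : G, Γ.dist a (arcMap hφ g b) ≤ n) ∧
        (∀ a b : ArcType T, Γ.Adj a b →
          (b.1.1 = a.1.2 ∧ b.1.2 = a.1.1) ∨ a.1.1 = b.1.1)) :=
  arc_geometric_characterisation_general hcg T htree hleafless φ hφ
end

section
/- Let G be a t.d.l.c. group and suppose that some compact open subgroup U of G is of finite quotient type. Then for every compact open subgroup V of G and every natural number n, there are only finitely many open subgroups of V of index n. In particular, G is locally of finite quotient type. -/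
open scoped Pointwise

/-! If `W` is open of index `n` in the compact open subgroup `V`, then `W ∩ U` is open of index
at most `n` in `U ∩ V`, hence of index at most `n · [U : U ∩ V]` in `U`. Each open subgroup of
index `m` in `U` contains its `U`-normal core, which is open of index dividing `m!`. Finite quotient
type of `U` leaves finitely many candidates for `W ∩ U`, and a subgroup of finite index lies in
only finitely many subgroups of `V`. -/

open Nat Subgroup

namespace Subgroup

variable {G : Type*} [Group G]

theorem index_normalCore_dvd_factorial (H : Subgroup G) [H.FiniteIndex] :
    H.normalCore.index ∣ H.index ! := by
  rw [normalCore_eq_ker, index_ker, index_eq_card, ← Nat.card_perm]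
  exact card_subgroup_dvd_card _

theorem preimage_image_mk_of_le {K H : Subgroup G} (hKH : K ≤ H) :
    QuotientGroup.mk ⁻¹' (QuotientGroup.mk '' (H : Set G) : Set (G ⧸ K)) = H := by
  rw [QuotientGroup.preimage_image_mk_eq_mul]
  refine le_antisymm ?_ (Set.subset_mul_left _ K.one_mem)
  rintro _ ⟨x, hx, y, hy, rfl⟩
  exact H.mul_mem hx (hKH hy)

theorem finite_setOf_le_of_finiteIndex (K : Subgroup G) [K.FiniteIndex] :
    {H : Subgroup G | K ≤ H}.Finite := by
  refine Set.Finite.of_finite_image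
    (f := fun H : Subgroup G => (QuotientGroup.mk '' H : Set (G ⧸ K)))
    (Set.toFinite _) fun H₁ h₁ H₂ h₂ h => ?_
  rw [← SetLike.coe_set_eq, ← preimage_image_mk_of_le h₁, ← preimage_image_mk_of_le h₂]
  exact congrArg _ h

theorem finite_setOf_le_le_of_relIndex_ne_zero {K V : Subgroup G} (h : K.relIndex V ≠ 0) :
    {W : Subgroup G | K ≤ W ∧ W ≤ V}.Finite := by
  have : (K.subgroupOf V).FiniteIndex := ⟨h⟩
  refine ((K.subgroupOf V).finite_setOf_le_of_finiteIndex.image (map V.subtype)).subset ?_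
  rintro W ⟨hKW, hWV⟩
  exact ⟨W.subgroupOf V, subgroupOf_mono V hKW, by rw [subgroupOf_map_subtype, inf_of_le_left hWV]⟩

variable [TopologicalSpace G] [IsTopologicalGroup G]

theorem relIndex_ne_zero_of_isOpen_of_isCompact {A B : Subgroup G}
    (hA : IsOpen (A : Set G)) (hB : IsCompact (B : Set G)) : A.relIndex B ≠ 0 := by
  have : CompactSpace B := isCompact_iff_compactSpace.mp hB
  have := quotient_finite_of_isOpen _ (subgroupOf_isOpen B A hA)
  exact index_ne_zero_of_finite

theorem exists_isOpen_le_relIndex_dvd_factorial {U W : Subgroup G} (hUo : IsOpen (U : Set G))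
    (hWo : IsOpen (W : Set G)) (hW : W.relIndex U ≠ 0) :
    ∃ N ≤ W, IsOpen (N : Set G) ∧ (∀ u ∈ U, ∀ x ∈ N, u * x * u⁻¹ ∈ N) ∧
      N.relIndex U ∣ (W.relIndex U)! := by
  have : (W.subgroupOf U).FiniteIndex := ⟨hW⟩
  set N := (W.subgroupOf U).normalCore
  have hNo : IsOpen (N : Set U) := N.isOpen_of_isClosed_of_finiteIndex <|
    normalCore_isClosed _ (isClosed_of_isOpen _ (subgroupOf_isOpen U W hWo))
  refine ⟨N.map U.subtype, ?_, hUo.isOpenMap_subtype_val _ hNo, ?_, ?_⟩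
  · calc N.map U.subtype ≤ (W.subgroupOf U).map U.subtype := map_mono (normalCore_le _)
      _ ≤ W := by rw [subgroupOf_map_subtype]; exact inf_le_left
  · rintro u hu _ ⟨y, hy, rfl⟩
    exact ⟨⟨u, hu⟩ * y * ⟨u, hu⟩⁻¹, (normalCore_normal _).conj_mem y hy _, rfl⟩
  · rw [relIndex, subgroupOf, comap_map_eq_self_of_injective U.subtype_injective]
    exact index_normalCore_dvd_factorial _

end Subgroup

section FiniteOpenSubgroupType

variable {G : Type*} [Group G] [TopologicalSpace G]

def FiniteOpenSubgroupType (V : Subgroup G) : Prop :=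
  ∀ n : ℕ, 0 < n → {W : Subgroup G | W ≤ V ∧ IsOpen (W : Set G) ∧ W.relIndex V = n}.Finite

theorem FiniteOpenSubgroupType.mono {D U : Subgroup G} (hU : FiniteOpenSubgroupType U)
    (hDU : D ≤ U) (hDi : D.relIndex U ≠ 0) : FiniteOpenSubgroupType D := by
  intro k hk
  refine (hU (k * D.relIndex U) (Nat.mul_pos hk (Nat.pos_of_ne_zero hDi))).subset ?_
  rintro W ⟨hWD, hWo, rfl⟩
  exact ⟨hWD.trans hDU, hWo, (relIndex_mul_relIndex W D U hWD hDU).symm⟩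

theorem FiniteOpenSubgroupType.of_isOpen_le {D V : Subgroup G} (hD : FiniteOpenSubgroupType D)
    (hDV : D ≤ V) (hDo : IsOpen (D : Set G)) (hDi : D.relIndex V ≠ 0) :
    FiniteOpenSubgroupType V := by
  intro n hn
  refine (((Set.finite_Icc 1 n).biUnion fun k hk => hD k hk.1).biUnion
    (t := fun K => {W | K ≤ W ∧ W ≤ V}) fun K hK => ?_).subset ?_
  · simp only [Set.mem_iUnion] at hK
    obtain ⟨k, hk, -, -, hKD⟩ := hK
    exact finite_setOf_le_le_of_relIndex_ne_zero
      (relIndex_ne_zero_trans (by rw [hKD]; exact Nat.one_le_iff_ne_zero.mp hk.1) hDi)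
  · rintro W ⟨hWV, hWo, rfl⟩
    have hWD : W.relIndex D ≠ 0 := mt (relIndex_eq_zero_of_le_right hDV) hn.ne'
    refine Set.mem_biUnion (x := W ⊓ D) ?_ ⟨inf_le_left, hWV⟩
    refine Set.mem_biUnion (x := W.relIndex D) ⟨Nat.pos_of_ne_zero hWD, ?_⟩
      ⟨inf_le_right, hWo.inter hDo, inf_relIndex_right W D⟩
    exact relIndex_le_of_le_right hDV hn.ne'

variable [IsTopologicalGroup G]

theorem FiniteQuotientType.finiteOpenSubgroupType {U : Subgroup G} (hU : FiniteQuotientType U)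
    (hUo : IsOpen (U : Set G)) : FiniteOpenSubgroupType U := by
  intro n hn
  refine (((Set.finite_Icc 1 n !).biUnion fun m hm => hU m hm.1).biUnion
    (t := fun N => {W | N ≤ W ∧ W ≤ U}) fun N hN => ?_).subset ?_
  · simp only [Set.mem_iUnion] at hN
    obtain ⟨m, hm, -, -, -, hNU⟩ := hN
    exact finite_setOf_le_le_of_relIndex_ne_zero
      (by rw [hNU]; exact Nat.one_le_iff_ne_zero.mp hm.1)
  · rintro W ⟨hWU, hWo, rfl⟩
    obtain ⟨N, hNW, hNo, hNU, hdvd⟩ := exists_isOpen_le_relIndex_dvd_factorial hUo hWo hn.ne'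
    have hN : N.relIndex U ≠ 0 := ne_zero_of_dvd_ne_zero (factorial_ne_zero _) hdvd
    refine Set.mem_biUnion (x := N) ?_ ⟨hNW, hWU⟩
    exact Set.mem_biUnion (x := N.relIndex U)
      ⟨Nat.pos_of_ne_zero hN, Nat.le_of_dvd (factorial_pos _) hdvd⟩
      ⟨hNW.trans hWU, hNo, hNU, rfl⟩

end FiniteOpenSubgroupType

theorem fqt_local_general {G : Type*} [Group G] [TopologicalSpace G] [IsTopologicalGroup G]
    (U : Subgroup G) (hUc : IsCompact (U : Set G)) (hUo : IsOpen (U : Set G))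
    (hU : FiniteQuotientType U) :
    (∀ V : Subgroup G, IsCompact (V : Set G) → IsOpen (V : Set G) → ∀ n : ℕ, 0 < n →
      {W : Subgroup G | W ≤ V ∧ IsOpen (W : Set G) ∧ W.relIndex V = n}.Finite) ∧
    LocallyFiniteQuotientType G := by
  have hV : ∀ V : Subgroup G, IsCompact (V : Set G) → IsOpen (V : Set G) →
      FiniteOpenSubgroupType V := fun V hVc hVo =>
    have hDo : IsOpen ((U ⊓ V : Subgroup G) : Set G) := hUo.inter hVo
    ((hU.finiteOpenSubgroupType hUo).mono inf_le_left
      (relIndex_ne_zero_of_isOpen_of_isCompact hDo hUc)).of_isOpen_le inf_le_right hDo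
      (relIndex_ne_zero_of_isOpen_of_isCompact hDo hVc)
  refine ⟨hV, fun V hVc hVo n hn => (hV V hVc hVo n hn).subset ?_⟩
  rintro N ⟨hNV, hNo, -, hN⟩
  exact ⟨hNV, hNo, hN⟩

/-- Lemma 2.4: if some compact open subgroup of a t.d.l.c. group is of finite quotient
type, then every compact open subgroup has only finitely many open subgroups of each
finite index; in particular the group is locally of finite quotient type. -/
theorem fqt_local {G : Type*} [Group G] [TopologicalSpace G] [IsTopologicalGroup G]
    [LocallyCompactSpace G] [TotallyDisconnectedSpace G] [T2Space G]
    (U : Subgroup G) (hUc : IsCompact (U : Set G)) (hUo : IsOpen (U : Set G))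
    (hU : FiniteQuotientType U) :
    (∀ V : Subgroup G, IsCompact (V : Set G) → IsOpen (V : Set G) → ∀ n : ℕ, 0 < n →
      {W : Subgroup G | W ≤ V ∧ IsOpen (W : Set G) ∧ W.relIndex V = n}.Finite) ∧
    LocallyFiniteQuotientType G :=
  fqt_local_general U hUc hUo hU
end

section
/- Let G be a nontrivial compactly generated t.d.l.c. group that is locally of finite quotient type, with QZ(G) = {1}, and such that ⋂_{g ∈ G} gOg^{-1} = {1} for some compact open subgroup O of G. Then every compact open subgroup U of G has only finitely many direct factors, i.e. only finitely many closed subgroups K for which there exists a closed subgroup L with U = K × L as a topological group. -/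
open scoped Pointwise

/-!
The direct factors of `U` behave like a Boolean algebra because `U` is centreless (its centre
lies in the quasi-centre): two splittings `U = K × L = K' × L'` cut `K` as
`K = (K ∩ K') × (K ∩ L')`. Hence infinitely many direct factors yield splittings `U = Mᵢ × Lᵢ`,
`i ∈ ℕ`, with `Mᵢ ≠ 1` and `Mₖ ≤ Lᵢ` for `k ≠ i`.

Each `Mᵢ` moves a point of a finite `Mᵢ`-invariant set `Z ⊆ G/O` of uniformly bounded size. If
`Mᵢ ⊄ O`, take `Z = UO/O`. Otherwise, as `O` has trivial core and `G` is generated by `O` and a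
finite set `F`, there are `p ∈ G` and `f ∈ F ∪ F⁻¹` with `Mᵢ ≤ pOp⁻¹` but `Mᵢ ⊄ (pf)O(pf)⁻¹`,
and `Z = p(OfO)/O` works. If `Pᵢ` is the kernel of the action of `Mᵢ` on `Z`, then `Pᵢ × Lᵢ` is
an open normal subgroup of `U` of bounded index containing every `Mₖ`, `k ≠ i`, but not `Mᵢ`.
These subgroups are pairwise distinct, contradicting finite quotient type.
-/

section DirectSplitting

variable {G : Type*} [Group G]

def HasTrivialCentre (V : Subgroup G) : Prop :=
  ∀ z ∈ V, (∀ v ∈ V, Commute z v) → z = 1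

theorem coe_mul_comm_of_commute {A B : Subgroup G} (hAB : ∀ a ∈ A, ∀ b ∈ B, Commute a b) :
    (A : Set G) * B = B * A := by
  ext x
  constructor
  · rintro ⟨a, ha, b, hb, rfl⟩
    exact ⟨b, hb, a, ha, (hAB a ha b hb).eq.symm⟩
  · rintro ⟨b, hb, a, ha, rfl⟩
    exact ⟨a, ha, b, hb, (hAB a ha b hb).eq⟩

theorem coe_sup_of_commute {A B : Subgroup G} (hAB : ∀ a ∈ A, ∀ b ∈ B, Commute a b) :
    ((A ⊔ B : Subgroup G) : Set G) = A * B := by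
  refine Subgroup.coe_mul_of_left_le_normalizer_right A B
    (le_trans ?_ (Subgroup.centralizer_le_normalizer (B : Set G)))
  exact fun a ha => Subgroup.mem_centralizer_iff.2 fun b hb => (hAB a ha b hb).eq.symm

variable [TopologicalSpace G]

theorem isClosed_sup_of_commute [ContinuousMul G] [T2Space G] {U A B : Subgroup G}
    (hU : IsCompact (U : Set G)) (hA : IsClosed (A : Set G)) (hAU : A ≤ U)
    (hB : IsClosed (B : Set G)) (hBU : B ≤ U) (hAB : ∀ a ∈ A, ∀ b ∈ B, Commute a b) :
    IsClosed ((A ⊔ B : Subgroup G) : Set G) := by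
  rw [coe_sup_of_commute hAB]
  exact ((hU.of_isClosed_subset hA hAU).mul (hU.of_isClosed_subset hB hBU)).isClosed

structure IsDirectSplitting (V A B : Subgroup G) : Prop where
  isClosed_left : IsClosed (A : Set G)
  isClosed_right : IsClosed (B : Set G)
  inf_eq_bot : A ⊓ B = ⊥
  commute : ∀ a ∈ A, ∀ b ∈ B, Commute a b
  mul_eq : (A : Set G) * B = V

def directFactors (V : Subgroup G) : Set (Subgroup G) :=
  {A | ∃ B, IsDirectSplitting V A B}

namespace IsDirectSplitting

variable {V A B : Subgroup G}

theorem exists_mul_eq (h : IsDirectSplitting V A B) {v : G} (hv : v ∈ V) :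
    ∃ a ∈ A, ∃ b ∈ B, a * b = v := by
  rwa [← SetLike.mem_coe, ← h.mul_eq] at hv

theorem mul_mem (h : IsDirectSplitting V A B) {a b : G} (ha : a ∈ A) (hb : b ∈ B) :
    a * b ∈ V := by
  rw [← SetLike.mem_coe, ← h.mul_eq]
  exact Set.mul_mem_mul ha hb

theorem left_le (h : IsDirectSplitting V A B) : A ≤ V := fun a ha => by
  simpa using h.mul_mem ha B.one_mem

theorem right_le (h : IsDirectSplitting V A B) : B ≤ V := fun b hb => by
  simpa using h.mul_mem A.one_mem hb

theorem symm (h : IsDirectSplitting V A B) : IsDirectSplitting V B A where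
  isClosed_left := h.isClosed_right
  isClosed_right := h.isClosed_left
  inf_eq_bot := inf_comm A B ▸ h.inf_eq_bot
  commute b hb a ha := (h.commute a ha b hb).symm
  mul_eq := (coe_mul_comm_of_commute h.commute) ▸ h.mul_eq

theorem eq_of_mul_eq (h : IsDirectSplitting V A B) {a₁ a₂ b₁ b₂ : G} (ha₁ : a₁ ∈ A)
    (ha₂ : a₂ ∈ A) (hb₁ : b₁ ∈ B) (hb₂ : b₂ ∈ B) (he : a₁ * b₁ = a₂ * b₂) :
    a₁ = a₂ ∧ b₁ = b₂ := by
  have hab : a₂⁻¹ * a₁ = b₂ * b₁⁻¹ := by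
    rw [inv_mul_eq_iff_eq_mul, ← mul_assoc, ← he, mul_inv_cancel_right]
  have hmem : a₂⁻¹ * a₁ ∈ A ⊓ B :=
    ⟨A.mul_mem (A.inv_mem ha₂) ha₁, hab ▸ B.mul_mem hb₂ (B.inv_mem hb₁)⟩
  rw [h.inf_eq_bot, Subgroup.mem_bot] at hmem
  refine ⟨(inv_mul_eq_one.1 hmem).symm, (mul_inv_eq_one.1 (hab ▸ hmem)).symm⟩

theorem conj_mem_left (h : IsDirectSplitting V A B) {v a : G} (hv : v ∈ V) (ha : a ∈ A) :
    v * a * v⁻¹ ∈ A := by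
  obtain ⟨x, hx, y, hy, rfl⟩ := h.exists_mul_eq hv
  have hya : y * a * y⁻¹ = a := by rw [(h.commute a ha y hy).symm.eq, mul_inv_cancel_right]
  rw [show x * y * a * (x * y)⁻¹ = x * (y * a * y⁻¹) * x⁻¹ by group, hya]
  exact A.mul_mem (A.mul_mem hx ha) (A.inv_mem hx)

theorem commute_of_forall (h : IsDirectSplitting V A B) {z : G} (hA : ∀ a ∈ A, Commute z a)
    (hB : ∀ b ∈ B, Commute z b) {v : G} (hv : v ∈ V) : Commute z v := by
  obtain ⟨a, ha, b, hb, rfl⟩ := h.exists_mul_eq hv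
  exact (hA a ha).mul_right (hB b hb)

theorem hasTrivialCentre_left (h : IsDirectSplitting V A B) (hV : HasTrivialCentre V) :
    HasTrivialCentre A := fun z hz hcomm =>
  hV z (h.left_le hz) fun _ => h.commute_of_forall hcomm fun b hb => h.commute z hz b hb

theorem mem_right_of_commute (h : IsDirectSplitting V A B) (hV : HasTrivialCentre V)
    {c : G} (hc : c ∈ V) (hcA : ∀ a ∈ A, Commute c a) : c ∈ B := by
  obtain ⟨a, ha, b, hb, rfl⟩ := h.exists_mul_eq hc
  have hcentral : a = 1 := by
    refine hV a (h.left_le ha) fun _ => h.commute_of_forall (fun a' ha' => ?_) (h.commute a ha)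
    simpa using (hcA a' ha').mul_left ((h.commute a' ha' b hb).symm.inv_left)
  simpa [hcentral] using hb

variable {K L K' L' : Subgroup G}

theorem coe_left_eq_inf_mul_inf (hV : HasTrivialCentre V) (h : IsDirectSplitting V K L)
    (h' : IsDirectSplitting V K' L') :
    (K : Set G) = (K ⊓ K' : Subgroup G) * (K ⊓ L' : Subgroup G) := by
  refine subset_antisymm (fun x hx => ?_) ?_
  · obtain ⟨x₁, hx₁, x₂, hx₂, rfl⟩ := h'.exists_mul_eq (h.left_le hx)
    -- conjugating by `l ∈ L` fixes `x₁ * x₂ ∈ K` and preserves both factors of `V = K' × L'`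
    have hx₁L : ∀ l ∈ L, Commute x₁ l := fun l hl => by
      have hfix : l * x₁ * l⁻¹ * (l * x₂ * l⁻¹) = x₁ * x₂ := by
        rw [show l * x₁ * l⁻¹ * (l * x₂ * l⁻¹) = l * (x₁ * x₂) * l⁻¹ by group,
          (h.commute _ hx l hl).symm.eq, mul_inv_cancel_right]
      have := (h'.eq_of_mul_eq (h'.conj_mem_left (h.right_le hl) hx₁) hx₁
        (h'.symm.conj_mem_left (h.right_le hl) hx₂) hx₂ hfix).1
      rw [mul_inv_eq_iff_eq_mul] at this
      exact this.symm
    have hx₁K : x₁ ∈ K := h.symm.mem_right_of_commute hV (h'.left_le hx₁) hx₁L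
    have hx₂K : x₂ ∈ K := by simpa using K.mul_mem (K.inv_mem hx₁K) hx
    exact Set.mul_mem_mul ⟨hx₁K, hx₁⟩ ⟨hx₂K, hx₂⟩
  · rintro _ ⟨y, hy, z, hz, rfl⟩
    exact K.mul_mem hy.1 hz.1

theorem restrict (hV : HasTrivialCentre V) (h : IsDirectSplitting V K L)
    (h' : IsDirectSplitting V K' L') : IsDirectSplitting K' (K ⊓ K') (L ⊓ K') where
  isClosed_left := h.isClosed_left.inter h'.isClosed_left
  isClosed_right := h.isClosed_right.inter h'.isClosed_left
  inf_eq_bot := eq_bot_iff.2 fun x hx => h.inf_eq_bot ▸ ⟨hx.1.1, hx.2.1⟩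
  commute a ha b hb := h.commute a ha.1 b hb.1
  mul_eq := by
    rw [h'.coe_left_eq_inf_mul_inf hV h, inf_comm K', inf_comm K']

theorem directFactors_infinite_or (hV : HasTrivialCentre V) (h : IsDirectSplitting V A B)
    (hinf : (directFactors V).Infinite) :
    (directFactors A).Infinite ∨ (directFactors B).Infinite := by
  by_contra! hfin
  refine hinf (Set.Finite.of_finite_image (f := fun K => (K ⊓ A, K ⊓ B))
    ((hfin.1.prod hfin.2).subset ?_) ?_)
  · rintro _ ⟨K, ⟨L, hKL⟩, rfl⟩
    exact ⟨⟨L ⊓ A, hKL.restrict hV h⟩, ⟨L ⊓ B, hKL.restrict hV h.symm⟩⟩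
  · rintro K ⟨L, hKL⟩ K' ⟨L', hKL'⟩ heq
    simp only [Prod.mk.injEq] at heq
    exact SetLike.coe_injective <| by
      rw [hKL.coe_left_eq_inf_mul_inf hV h, hKL'.coe_left_eq_inf_mul_inf hV h, heq.1, heq.2]

section Compact

variable [T2Space G] {U C : Subgroup G}

theorem self_bot (hU : IsCompact (U : Set G)) : IsDirectSplitting U U ⊥ where
  isClosed_left := hU.isClosed
  isClosed_right := by simp
  inf_eq_bot := inf_bot_eq U
  commute a _ b hb := by rw [Subgroup.mem_bot.1 hb]; exact Commute.one_right a
  mul_eq := by simp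

theorem trans [ContinuousMul G] (hU : IsCompact (U : Set G)) (hVC : IsDirectSplitting U V C)
    (h : IsDirectSplitting V A B) : IsDirectSplitting U A (B ⊔ C) := by
  have hBC : ∀ b ∈ B, ∀ c ∈ C, Commute b c := fun b hb => hVC.commute b (h.right_le hb)
  have hAC : ∀ a ∈ A, ∀ c ∈ C, Commute a c := fun a ha => hVC.commute a (h.left_le ha)
  refine ⟨h.isClosed_left, isClosed_sup_of_commute hU h.isClosed_right
    (h.right_le.trans hVC.left_le) hVC.isClosed_right hVC.right_le hBC, ?_, ?_, ?_⟩
  · refine eq_bot_iff.2 fun x ⟨hxA, hxBC⟩ => ?_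
    obtain ⟨b, hb, c, hc, hbc⟩ : x ∈ (B : Set G) * C := coe_sup_of_commute hBC ▸ hxBC
    obtain ⟨rfl, -⟩ := hVC.eq_of_mul_eq (h.left_le hxA) (h.right_le hb) C.one_mem hc
      (by rw [mul_one]; exact hbc.symm)
    rw [← h.inf_eq_bot]
    exact ⟨hxA, hb⟩
  · intro a ha x hx
    obtain ⟨b, hb, c, hc, rfl⟩ : x ∈ (B : Set G) * C := coe_sup_of_commute hBC ▸ hx
    exact (h.commute a ha b hb).mul_right (hAC a ha c hc)
  · rw [coe_sup_of_commute hBC, ← mul_assoc, h.mul_eq, hVC.mul_eq]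

end Compact

theorem exists_ne_bot_directFactors_infinite (hV : HasTrivialCentre V)
    (hinf : (directFactors V).Infinite) :
    ∃ A B, IsDirectSplitting V A B ∧ A ≠ ⊥ ∧ (directFactors B).Infinite := by
  obtain ⟨K, ⟨L, hKL⟩, hK⟩ := (hinf.sdiff (Set.toFinite {⊥, V})).nonempty
  simp only [Set.mem_insert_iff, Set.mem_singleton_iff, not_or] at hK
  have hL : L ≠ ⊥ := fun hL => hK.2 <| SetLike.coe_injective <| by
    rw [← hKL.mul_eq, hL]; simp
  rcases hKL.directFactors_infinite_or hV hinf with hKinf | hLinf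
  · exact ⟨L, K, hKL.symm, hL, hKinf⟩
  · exact ⟨K, L, hKL, hK.1, hLinf⟩

end IsDirectSplitting

theorem exists_orthogonal_directFactors [ContinuousMul G] [T2Space G] {U : Subgroup G}
    (hU : IsCompact (U : Set G)) (hUz : HasTrivialCentre U) (hinf : (directFactors U).Infinite) :
    ∃ M L : ℕ → Subgroup G, (∀ i, IsDirectSplitting U (M i) (L i)) ∧ (∀ i, M i ≠ ⊥) ∧
      ∀ i k, i ≠ k → M k ≤ L i := by
  let State := {p : Subgroup G × Subgroup G //
    IsDirectSplitting U p.1 p.2 ∧ (directFactors p.1).Infinite}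
  choose A B hAB hA hB using fun s : State =>
    IsDirectSplitting.exists_ne_bot_directFactors_infinite (s.2.1.hasTrivialCentre_left hUz) s.2.2
  -- a state `(V, C)` records `U = V × C`; a step splits `V = A × B` and moves `A` into `C`
  let next (s : State) : State := ⟨(B s, A s ⊔ s.1.2), s.2.1.trans hU (hAB s).symm, hB s⟩
  let s (n : ℕ) : State := next^[n] ⟨(U, ⊥), IsDirectSplitting.self_bot hU, hinf⟩
  have hs (n : ℕ) : s (n + 1) = next (s n) := Function.iterate_succ_apply' next n _
  have hV : Antitone fun n => (s n).1.1 := antitone_nat_of_succ_le fun n => by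
    rw [hs]; exact (hAB (s n)).right_le
  have hC : Monotone fun n => (s n).1.2 := monotone_nat_of_le_succ fun n => by
    rw [hs]; exact le_sup_right
  refine ⟨fun n => A (s n), fun n => B (s n) ⊔ (s n).1.2,
    fun n => (s n).2.1.trans hU (hAB (s n)), fun n => hA (s n), fun i k hik => ?_⟩
  rcases hik.lt_or_gt with hik | hik
  · calc A (s k) ≤ (s k).1.1 := (hAB (s k)).left_le
      _ ≤ (s (i + 1)).1.1 := hV hik
      _ = B (s i) := by rw [hs]
      _ ≤ _ := le_sup_left
  · calc A (s k) ≤ (s (k + 1)).1.2 := by rw [hs]; exact le_sup_left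
      _ ≤ (s i).1.2 := hC hik
      _ ≤ _ := le_sup_right

end DirectSplitting

section FixingSubgroup

open MulAction

variable {G X : Type*} [Group G] [MulAction G X]

theorem fixingSubgroup_eq_iInf_stabilizer (Z : Set X) :
    fixingSubgroup G Z = ⨅ z : Z, stabilizer G (z : X) := by
  ext g
  simp [mem_fixingSubgroup_iff, Subgroup.mem_iInf]

theorem conj_mem_fixingSubgroup {M : Subgroup G} {Z : Set X} (hZ : ∀ m ∈ M, ∀ z ∈ Z, m • z ∈ Z)
    {m x : G} (hm : m ∈ M) (hx : x ∈ fixingSubgroup G Z) : m * x * m⁻¹ ∈ fixingSubgroup G Z := by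
  rw [mem_fixingSubgroup_iff] at hx ⊢
  intro z hz
  rw [mul_smul, mul_smul, hx _ (hZ _ (M.inv_mem hm) z hz), smul_inv_smul]

theorem relIndex_fixingSubgroup_ne_zero_and_le {M : Subgroup G} {Z : Set X} (hZfin : Z.Finite)
    (hZ : ∀ m ∈ M, ∀ z ∈ Z, m • z ∈ Z) :
    (fixingSubgroup G Z).relIndex M ≠ 0 ∧ (fixingSubgroup G Z).relIndex M ≤ Z.ncard ^ Z.ncard := by
  have := hZfin.fintype
  have horbit (z : Z) : (stabilizer G (z : X)).relIndex M = (orbit M (z : X)).ncard :=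
    index_stabilizer M (z : X)
  have horbit_le (z : Z) : (orbit M (z : X)).ncard ≤ Z.ncard := by
    refine Set.ncard_le_ncard ?_ hZfin
    rintro _ ⟨m, rfl⟩
    exact hZ m m.2 z z.2
  rw [fixingSubgroup_eq_iInf_stabilizer]
  refine ⟨Subgroup.relIndex_iInf_ne_zero fun z => ?_, (Subgroup.relIndex_iInf_le _).trans ?_⟩
  · rw [horbit]
    exact Set.ncard_ne_zero_of_mem (mem_orbit_self (z : X)) ((hZfin.subset fun _ ⟨m, hm⟩ =>
      hm ▸ hZ m m.2 z z.2))
  · calc ∏ z : Z, (stabilizer G (z : X)).relIndex M ≤ ∏ _z : Z, Z.ncard :=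
          Finset.prod_le_prod' fun z _ => (horbit z).trans_le (horbit_le z)
      _ = Z.ncard ^ Z.ncard := by rw [Finset.prod_const, Finset.card_univ, Set.fintypeCard_eq_ncard]

end FixingSubgroup

section Topological

variable {G : Type*} [Group G] [TopologicalSpace G] [IsTopologicalGroup G]

theorem isClosed_fixingSubgroup_quotient {O : Subgroup G} (hO : IsOpen (O : Set G))
    (Z : Set (G ⧸ O)) : IsClosed (fixingSubgroup G Z : Set G) := by
  have := QuotientGroup.discreteTopology hO
  rw [fixingSubgroup_eq_iInf_stabilizer, Subgroup.coe_iInf]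
  exact isClosed_iInter fun z =>
    Subgroup.isClosed_of_isOpen _ (stabilizer_isOpen G (z : G ⧸ O))

theorem finite_image_mk_of_isCompact {O : Subgroup G} (hO : IsOpen (O : Set G)) {K : Set G}
    (hK : IsCompact K) : (QuotientGroup.mk '' K : Set (G ⧸ O)).Finite := by
  have := QuotientGroup.discreteTopology hO
  exact (hK.image QuotientGroup.continuous_mk).finite_of_discrete

theorem isOpen_of_isClosed_of_relIndex_ne_zero {U A : Subgroup G} (hU : IsOpen (U : Set G))
    (hA : IsClosed (A : Set G)) (hAU : A ≤ U) (hindex : A.relIndex U ≠ 0) :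
    IsOpen (A : Set G) := by
  have : (A.subgroupOf U).FiniteIndex := ⟨hindex⟩
  have hopen := (A.subgroupOf U).isOpen_of_isClosed_of_finiteIndex
    (hA.preimage continuous_subtype_val)
  convert hU.isOpenMap_subtype_val _ hopen
  ext x
  exact ⟨fun hx => ⟨⟨x, hAU hx⟩, hx, rfl⟩, by rintro ⟨y, hy, rfl⟩; exact hy⟩

theorem CompactlyGeneratedGrp.exists_finite_closure_union_eq_top (hG : CompactlyGeneratedGrp G)
    {O : Subgroup G} (hO : IsOpen (O : Set G)) :
    ∃ F : Set G, F.Finite ∧ Subgroup.closure ((O : Set G) ∪ F) = ⊤ := by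
  obtain ⟨S, hS, hSgen⟩ := hG
  obtain ⟨t, ht⟩ := hS.elim_finite_subcover (fun g : G => g • (O : Set G)) (fun g => hO.smul g)
    fun s _ => Set.mem_iUnion.2 ⟨s, 1, O.one_mem, mul_one s⟩
  refine ⟨t, t.finite_toSet, eq_top_iff.2 (hSgen ▸ Subgroup.closure_le _ |>.2 fun s hs => ?_)⟩
  obtain ⟨g, hg, o, ho, rfl⟩ := Set.mem_iUnion₂.1 (ht hs)
  exact Subgroup.mul_mem _ (Subgroup.subset_closure (Or.inr hg))
    (Subgroup.subset_closure (Or.inl ho))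

theorem hasTrivialCentre_of_isOpen (hQZ : ∀ g : G, InQuasiCentre g → g = 1) {U : Subgroup G}
    (hU : IsOpen (U : Set G)) : HasTrivialCentre U := fun z _ hz =>
  hQZ z <| Subgroup.isOpen_mono
    (fun u hu => Subgroup.mem_centralizer_singleton_iff.2 (hz u hu).eq.symm) hU

end Topological

section Escape

variable {G : Type*} [Group G]

theorem exists_conj_le_not_conj_le {O M : Subgroup G} {F : Set G}
    (hgen : Subgroup.closure ((O : Set G) ∪ F) = ⊤)
    (hcore : ∀ x : G, (∀ g : G, g⁻¹ * x * g ∈ O) → x = 1) (hMO : M ≤ O) (hM : M ≠ ⊥) :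
    ∃ p : G, (∀ m ∈ M, p⁻¹ * m * p ∈ O) ∧
      ∃ f ∈ F ∪ F⁻¹, ∃ m ∈ M, (p * f)⁻¹ * m * (p * f) ∉ O := by
  by_contra! hstable
  have hO_conj {p o : G} (hp : ∀ m ∈ M, p⁻¹ * m * p ∈ O) (ho : o ∈ O) :
      ∀ m ∈ M, (p * o)⁻¹ * m * (p * o) ∈ O := fun m hm => by
    rw [show (p * o)⁻¹ * m * (p * o) = o⁻¹ * (p⁻¹ * m * p) * o by group]
    exact O.mul_mem (O.mul_mem (O.inv_mem ho) (hp m hm)) ho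
  -- the elements `p` with `M ≤ p O p⁻¹` contain `1` and are stable under right multiplication
  -- by the generators and their inverses, so every conjugate of `O` contains `M`
  have hall (g : G) : ∀ m ∈ M, g⁻¹ * m * g ∈ O := by
    induction (hgen ▸ Subgroup.mem_top g : g ∈ Subgroup.closure ((O : Set G) ∪ F))
      using Subgroup.closure_induction_right with
    | one => simpa using fun m hm => hMO hm
    | mul_right x _ y hy ih =>
      rcases hy with hy | hy
      · exact hO_conj ih hy
      · exact hstable x ih y (Or.inl hy)
    | mul_inv_cancel x _ y hy ih =>
      rcases hy with hy | hy
      · exact hO_conj ih (O.inv_mem hy)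
      · exact hstable x ih y⁻¹ (Or.inr (Set.inv_mem_inv.2 hy))
  exact hM (eq_bot_iff.2 fun m hm => hcore m fun g => hall g m hm)

theorem smul_mem_smul_image_mk {O M : Subgroup G} {K : Set G} {p : G}
    (hK : ∀ m ∈ M, ∀ k ∈ K, p⁻¹ * m * p * k ∈ K) {m : G} (hm : m ∈ M) {z : G ⧸ O}
    (hz : z ∈ p • (QuotientGroup.mk '' K : Set (G ⧸ O))) :
    m • z ∈ p • (QuotientGroup.mk '' K : Set (G ⧸ O)) := by
  obtain ⟨_, ⟨k, hk, rfl⟩, rfl⟩ := hz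
  refine ⟨_, ⟨_, hK m hm k hk, rfl⟩, ?_⟩
  simp [MulAction.Quotient.smul_mk, mul_assoc]

theorem smul_mk_ne {O : Subgroup G} {m g : G} (h : g⁻¹ * m * g ∉ O) :
    m • (g : G ⧸ O) ≠ g := by
  rw [MulAction.Quotient.smul_mk, ne_eq, QuotientGroup.eq]
  contrapose! h
  simpa [mul_assoc] using O.inv_mem h

theorem exists_translate_invariant_moved {O U M : Subgroup G} {F : Set G}
    (hgen : Subgroup.closure ((O : Set G) ∪ F) = ⊤)
    (hcore : ∀ x : G, (∀ g : G, g⁻¹ * x * g ∈ O) → x = 1) (hMU : M ≤ U) (hM : M ≠ ⊥) :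
    ∃ p : G, ∃ K ∈ insert (U : Set G) ((fun f => (O : Set G) * {f} * O) '' (F ∪ F⁻¹)),
      (∀ m ∈ M, ∀ k ∈ K, p⁻¹ * m * p * k ∈ K) ∧ ∃ m ∈ M, ∃ k ∈ K, (p * k)⁻¹ * m * (p * k) ∉ O := by
  by_cases hMO : M ≤ O
  · obtain ⟨p, hp, f, hf, m, hm, hmf⟩ := exists_conj_le_not_conj_le hgen hcore hMO hM
    refine ⟨p, _, Set.mem_insert_of_mem _ ⟨f, hf, rfl⟩, ?_, m, hm, f,
      ⟨_, ⟨1, O.one_mem, f, rfl, one_mul f⟩, 1, O.one_mem, mul_one f⟩, hmf⟩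
    rintro m hm _ ⟨_, ⟨o, ho, _, rfl, rfl⟩, o', ho', rfl⟩
    exact ⟨_, ⟨_, O.mul_mem (hp m hm) ho, _, rfl, rfl⟩, o', ho', by simp [mul_assoc]⟩
  · obtain ⟨m, hm, hmO⟩ := SetLike.not_le_iff_exists.1 hMO
    exact ⟨1, U, Set.mem_insert _ _, fun m hm k hk => by simpa using U.mul_mem (hMU hm) hk,
      m, hm, 1, U.one_mem, by simpa using hmO⟩

end Escape

theorem Subgroup.relIndex_eq_of_le_sup {G : Type*} [Group G] {D M U : Subgroup G} (hDU : D ≤ U)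
    (hMU : M ≤ U) (hU : U ≤ M ⊔ D) (hD : ∀ u ∈ U, ∀ x ∈ D, u * x * u⁻¹ ∈ D) :
    D.relIndex U = D.relIndex M := by
  have : (D.subgroupOf U).Normal :=
    (Subgroup.normal_subgroupOf_iff hDU).2 fun x u hx hu => hD u hu x hx
  have htop : M.subgroupOf U ⊔ D.subgroupOf U = ⊤ := by
    rw [← Subgroup.subgroupOf_sup hMU hDU, Subgroup.subgroupOf_eq_top]
    exact hU
  have := Subgroup.relIndex_sup_right (M.subgroupOf U) (D.subgroupOf U)
  rwa [htop, Subgroup.relIndex_top_right, Subgroup.relIndex_subgroupOf hMU] at this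

section NormalSubgroups

variable {G : Type*} [Group G] [TopologicalSpace G]

def openNormalSubgroupsOfIndexLE (U : Subgroup G) (n : ℕ) : Set (Subgroup G) :=
  {N | N ≤ U ∧ IsOpen (N : Set G) ∧ (∀ u ∈ U, ∀ x ∈ N, u * x * u⁻¹ ∈ N) ∧
    N.relIndex U ≠ 0 ∧ N.relIndex U ≤ n}

theorem FiniteQuotientType.finite_openNormalSubgroupsOfIndexLE {U : Subgroup G}
    (hU : FiniteQuotientType U) (n : ℕ) : (openNormalSubgroupsOfIndexLE U n).Finite := by
  refine ((Set.finite_Icc 1 n).biUnion fun k hk => hU k hk.1).subset ?_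
  rintro N ⟨hNU, hNo, hNn, hne, hle⟩
  exact Set.mem_biUnion ⟨Nat.one_le_iff_ne_zero.2 hne, hle⟩ ⟨hNU, hNo, hNn, rfl⟩

namespace IsDirectSplitting

variable {U M L P : Subgroup G}

theorem conj_mem_sup_right (h : IsDirectSplitting U M L) (hPM : P ≤ M)
    (hP : ∀ m ∈ M, ∀ x ∈ P, m * x * m⁻¹ ∈ P) {u x : G} (hu : u ∈ U) (hx : x ∈ P ⊔ L) :
    u * x * u⁻¹ ∈ P ⊔ L := by
  have hPL : ∀ p ∈ P, ∀ l ∈ L, Commute p l := fun p hp => h.commute p (hPM hp)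
  obtain ⟨p, hp, l, hl, rfl⟩ : x ∈ (P : Set G) * L := coe_sup_of_commute hPL ▸ hx
  obtain ⟨m, hm, l', hl', rfl⟩ := h.exists_mul_eq hu
  have hl'' : l' * l * l'⁻¹ ∈ L := L.mul_mem (L.mul_mem hl' hl) (L.inv_mem hl')
  have hconj : m * l' * (p * l) * (m * l')⁻¹ = (m * p * m⁻¹) * (l' * l * l'⁻¹) := by
    calc m * l' * (p * l) * (m * l')⁻¹ = m * (l' * p) * l * l'⁻¹ * m⁻¹ := by group
      _ = m * p * (l' * l * l'⁻¹) * m⁻¹ := by rw [(hPL p hp l' hl').eq.symm]; group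
      _ = m * p * m⁻¹ * (m * (l' * l * l'⁻¹)) * m⁻¹ := by group
      _ = _ := by rw [(h.commute m hm _ hl'').eq]; group
  rw [hconj]
  exact Subgroup.mul_mem _ (Subgroup.mem_sup_left (hP m hm p hp)) (Subgroup.mem_sup_right hl'')

theorem sup_right_inf_left (h : IsDirectSplitting U M L) (hPM : P ≤ M) : (P ⊔ L) ⊓ M = P := by
  refine le_antisymm (fun x ⟨hx, hxM⟩ => ?_) fun p hp => ⟨Subgroup.mem_sup_left hp, hPM hp⟩
  obtain ⟨p, hp, l, hl, rfl⟩ : x ∈ (P : Set G) * L :=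
    coe_sup_of_commute (fun p hp => h.commute p (hPM hp)) ▸ hx
  have hlM : l ∈ M ⊓ L := ⟨by simpa using M.mul_mem (M.inv_mem (hPM hp)) hxM, hl⟩
  rw [h.inf_eq_bot, Subgroup.mem_bot] at hlM
  simpa [hlM] using hp

theorem relIndex_sup_right (h : IsDirectSplitting U M L) (hPM : P ≤ M)
    (hP : ∀ m ∈ M, ∀ x ∈ P, m * x * m⁻¹ ∈ P) : (P ⊔ L).relIndex U = P.relIndex M := by
  rw [Subgroup.relIndex_eq_of_le_sup (sup_le (hPM.trans h.left_le) h.right_le) h.left_le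
    ?_ fun u hu x hx => h.conj_mem_sup_right hPM hP hu hx,
    ← Subgroup.inf_relIndex_right, h.sup_right_inf_left hPM]
  intro u hu
  obtain ⟨m, hm, l, hl, rfl⟩ := h.exists_mul_eq hu
  exact Subgroup.mul_mem _ (Subgroup.mem_sup_left hm)
    (Subgroup.mem_sup_right (Subgroup.mem_sup_right hl))

end IsDirectSplitting

end NormalSubgroups

section Separation

variable {G : Type*} [Group G] [TopologicalSpace G] [IsTopologicalGroup G]

theorem exists_finite_invariant_set_moved (hG : CompactlyGeneratedGrp G) {O U : Subgroup G}
    (hOc : IsCompact (O : Set G)) (hOo : IsOpen (O : Set G))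
    (hcore : ∀ x : G, (∀ g : G, g⁻¹ * x * g ∈ O) → x = 1) (hUc : IsCompact (U : Set G)) :
    ∃ c : ℕ, ∀ M : Subgroup G, M ≤ U → M ≠ ⊥ → ∃ Z : Set (G ⧸ O), Z.Finite ∧ Z.ncard ≤ c ∧
      (∀ m ∈ M, ∀ z ∈ Z, m • z ∈ Z) ∧ ∃ m ∈ M, ∃ z ∈ Z, m • z ≠ z := by
  obtain ⟨F, hF, hgen⟩ := hG.exists_finite_closure_union_eq_top hOo
  set 𝒦 := insert (U : Set G) ((fun f => (O : Set G) * {f} * O) '' (F ∪ F⁻¹))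
  have h𝒦 : ∀ K ∈ 𝒦, IsCompact K := by
    rintro K (rfl | ⟨f, -, rfl⟩)
    exacts [hUc, (hOc.mul isCompact_singleton).mul hOc]
  obtain ⟨c, hc⟩ := (((hF.union hF.inv).image _).insert _).image
    (fun K => (QuotientGroup.mk '' K : Set (G ⧸ O)).ncard) |>.bddAbove
  refine ⟨c, fun M hMU hM => ?_⟩
  obtain ⟨p, K, hK, hinv, m, hm, k, hk, hmk⟩ := exists_translate_invariant_moved hgen hcore hMU hM
  refine ⟨p • (QuotientGroup.mk '' K : Set (G ⧸ O)),
    (finite_image_mk_of_isCompact hOo (h𝒦 K hK)).smul_set, ?_,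
    fun m hm z hz => smul_mem_smul_image_mk hinv hm hz, m, hm, _,
    Set.smul_mem_smul_set (Set.mem_image_of_mem _ hk), ?_⟩
  · rw [Set.ncard_smul_set]
    exact hc ⟨K, hK, rfl⟩
  · rw [MulAction.Quotient.smul_mk]
    exact smul_mk_ne hmk

theorem IsDirectSplitting.exists_openNormal_not_le [T2Space G] {O U M L : Subgroup G}
    (hOo : IsOpen (O : Set G)) (hUc : IsCompact (U : Set G)) (hUo : IsOpen (U : Set G))
    (h : IsDirectSplitting U M L) {Z : Set (G ⧸ O)} (hZfin : Z.Finite)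
    (hZ : ∀ m ∈ M, ∀ z ∈ Z, m • z ∈ Z) (hmove : ∃ m ∈ M, ∃ z ∈ Z, m • z ≠ z) :
    ∃ D ∈ openNormalSubgroupsOfIndexLE U (Z.ncard ^ Z.ncard), L ≤ D ∧ ¬ M ≤ D := by
  set P := fixingSubgroup G Z ⊓ M
  have hPM : P ≤ M := inf_le_right
  have hP : ∀ m ∈ M, ∀ x ∈ P, m * x * m⁻¹ ∈ P := fun m hm x hx =>
    ⟨conj_mem_fixingSubgroup hZ hm hx.1, M.mul_mem (M.mul_mem hm hx.2) (M.inv_mem hm)⟩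
  have hDU : P ⊔ L ≤ U := sup_le (hPM.trans h.left_le) h.right_le
  have hDc : IsClosed ((P ⊔ L : Subgroup G) : Set G) :=
    isClosed_sup_of_commute hUc ((isClosed_fixingSubgroup_quotient hOo Z).inter h.isClosed_left)
      (hPM.trans h.left_le) h.isClosed_right h.right_le fun p hp => h.commute p (hPM hp)
  obtain ⟨hne, hle⟩ := relIndex_fixingSubgroup_ne_zero_and_le hZfin hZ
  have hindex : (P ⊔ L).relIndex U = (fixingSubgroup G Z).relIndex M := by
    rw [h.relIndex_sup_right hPM hP, Subgroup.inf_relIndex_right]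
  refine ⟨P ⊔ L, ⟨hDU, isOpen_of_isClosed_of_relIndex_ne_zero hUo hDc hDU (hindex ▸ hne),
    fun u hu x hx => h.conj_mem_sup_right hPM hP hu hx, hindex ▸ hne, hindex ▸ hle⟩,
    le_sup_right, fun hMD => ?_⟩
  obtain ⟨m, hm, z, hz, hmz⟩ := hmove
  have hmP : m ∈ P := h.sup_right_inf_left hPM ▸ ⟨hMD hm, hm⟩
  exact hmz (mem_fixingSubgroup_iff G |>.1 hmP.1 z hz)

theorem exists_openNormal_separating_directFactors [T2Space G] (hG : CompactlyGeneratedGrp G)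
    {O U : Subgroup G} (hOc : IsCompact (O : Set G)) (hOo : IsOpen (O : Set G))
    (hcore : ∀ x : G, (∀ g : G, g⁻¹ * x * g ∈ O) → x = 1) (hUc : IsCompact (U : Set G))
    (hUo : IsOpen (U : Set G)) :
    ∃ n : ℕ, ∀ M L : Subgroup G, IsDirectSplitting U M L → M ≠ ⊥ →
      ∃ D ∈ openNormalSubgroupsOfIndexLE U n, L ≤ D ∧ ¬ M ≤ D := by
  obtain ⟨c, hc⟩ := exists_finite_invariant_set_moved hG hOc hOo hcore hUc
  refine ⟨c ^ c, fun M L h hM => ?_⟩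
  obtain ⟨Z, hZfin, hZc, hZ, hmove⟩ := hc M h.left_le hM
  obtain ⟨D, ⟨hDU, hDo, hDn, hne, hle⟩, hLD, hMD⟩ :=
    h.exists_openNormal_not_le hOo hUc hUo hZfin hZ hmove
  exact ⟨D, ⟨hDU, hDo, hDn, hne, hle.trans (Nat.pow_self_mono hZc)⟩, hLD, hMD⟩

end Separation

theorem finitely_many_direct_factors_general {G : Type*} [Group G] [TopologicalSpace G]
    [IsTopologicalGroup G] [T2Space G]
    (hcg : CompactlyGeneratedGrp G)
    (hfqt : LocallyFiniteQuotientType G)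
    (hQZ : ∀ g : G, InQuasiCentre g → g = 1)
    (O : Subgroup G) (hOc : IsCompact (O : Set G)) (hOo : IsOpen (O : Set G))
    (hcore : ∀ x : G, (∀ g : G, g⁻¹ * x * g ∈ O) → x = 1)
    (U : Subgroup G) (hUc : IsCompact (U : Set G)) (hUo : IsOpen (U : Set G)) :
    {K : Subgroup G | IsClosed (K : Set G) ∧ K ≤ U ∧ ∃ L : Subgroup G,
      IsClosed (L : Set G) ∧ L ≤ U ∧ K ⊓ L = ⊥ ∧
      (∀ k ∈ K, ∀ l ∈ L, k * l = l * k) ∧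
      (K : Set G) * (L : Set G) = (U : Set G)}.Finite := by
  have hUz : HasTrivialCentre U := hasTrivialCentre_of_isOpen hQZ hUo
  refine Set.Finite.subset (s := directFactors U) ?_
    fun K ⟨hKc, _, L, hLc, _, hKL, hcomm, hmul⟩ => ⟨L, hKc, hLc, hKL, hcomm, hmul⟩
  by_contra hinf
  obtain ⟨M, L, hML, hM, horth⟩ := exists_orthogonal_directFactors hUc hUz hinf
  obtain ⟨n, hn⟩ := exists_openNormal_separating_directFactors hcg hOc hOo hcore hUc hUo
  choose D hD hLD hMD using fun i => hn (M i) (L i) (hML i) (hM i)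
  have hDinj : Function.Injective D := fun i k hik => by
    by_contra hne
    exact hMD k (hik ▸ (horth i k hne).trans (hLD i))
  exact Set.infinite_range_of_injective hDinj
    (((hfqt U hUc hUo).finite_openNormalSubgroupsOfIndexLE n).subset (Set.range_subset_iff.2 hD))

/-- Lemma 2.5: a nontrivial compactly generated t.d.l.c. group that is locally of finite
quotient type, with trivial quasi-centre and some compact open subgroup with trivial
normal core, has only finitely many direct factors of each compact open subgroup. -/
theorem finitely_many_direct_factors {G : Type*} [Group G] [TopologicalSpace G]
    [IsTopologicalGroup G] [LocallyCompactSpace G] [TotallyDisconnectedSpace G] [T2Space G]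
    [Nontrivial G]
    (hcg : CompactlyGeneratedGrp G)
    (hfqt : LocallyFiniteQuotientType G)
    (hQZ : ∀ g : G, InQuasiCentre g → g = 1)
    (O : Subgroup G) (hOc : IsCompact (O : Set G)) (hOo : IsOpen (O : Set G))
    (hcore : ∀ x : G, (∀ g : G, g⁻¹ * x * g ∈ O) → x = 1)
    (U : Subgroup G) (hUc : IsCompact (U : Set G)) (hUo : IsOpen (U : Set G)) :
    {K : Subgroup G | IsClosed (K : Set G) ∧ K ≤ U ∧ ∃ L : Subgroup G,
      IsClosed (L : Set G) ∧ L ≤ U ∧ K ⊓ L = ⊥ ∧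
      (∀ k ∈ K, ∀ l ∈ L, k * l = l * k) ∧
      (K : Set G) * (L : Set G) = (U : Set G)}.Finite :=
  finitely_many_direct_factors_general hcg hfqt hQZ O hOc hOo hcore U hUc hUo
end

section
/- Let G be a t.d.l.c. group and let (K,U) be a TMS pair of G. Then: (i) K is infinite and has compact closure (in particular K is nondiscrete), and (g K̄ g^{-1}, U) is a TMS pair of G for every g ∈ G, where K̄ denotes the closure of K; (ii) for every compact normal subgroup M of G, the pair (KM/M, UM/M) is a TMS pair of the quotient group G/M. -/
/-!
By (b) some conjugate `a K a⁻¹` lies in the compact open subgroup `U`, so `K̄` is compact; by (c)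
with `N = 1`, `K` is infinite. A discrete subgroup of a Hausdorff group is closed, so a discrete
`K` would be compact and discrete, hence finite.

Everything else is bookkeeping with the transporters `{g | g K g⁻¹ ⊆ S}` occurring in (a) and (b).
For closed `S` they do not change when `K` is replaced by `K̄`, and replacing `K` by `g K g⁻¹`
translates them on the right by `g⁻¹`. The projection `π : G → G/M` is proper because `M` is
compact, and `π⁻¹` of the transporter of `π K` into `π S` is the transporter of `K` into `S M`;
this reduces (a), (b), (c) for `G/M` to the same conditions for `G`, with `N` replaced by `π⁻¹ N`.
-/

open scoped Pointwise

namespace QuotientGroup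

variable {G : Type*} [Group G] [TopologicalSpace G] [IsTopologicalGroup G]

theorem isProperMap_coe {H : Subgroup G} (hH : IsCompact (H : Set G)) :
    IsProperMap ((↑) : G → G ⧸ H) := by
  refine isProperMap_iff_isClosedMap_and_compact_fibers.mpr
    ⟨continuous_mk, isClosedMap_coe hH, fun y => ?_⟩
  obtain ⟨g, rfl⟩ := mk_surjective y
  rw [← Set.image_singleton, preimage_image_mk_eq_mul]
  exact isCompact_singleton.mul hH

end QuotientGroup

theorem Subgroup.relIndex_map_conj {G : Type*} [Group G] (N : Subgroup G) [N.Normal]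
    (K : Subgroup G) (g : G) :
    N.relIndex (K.map (MulAut.conj g).toMonoidHom) = N.relIndex K := by
  conv_lhs => rw [← Subgroup.Normal.map_conj_eq N g]
  exact Subgroup.relIndex_map_map_of_injective _ _ (MulAut.conj g).injective

section ConjTransporter

variable {G H : Type*} [Group G] [Group H]

def conjTransporter (K S : Set G) : Set G := {g | ∀ k ∈ K, g * k * g⁻¹ ∈ S}

theorem conjTransporter_mono {K K' S S' : Set G} (hK : K' ⊆ K) (hS : S ⊆ S') :
    conjTransporter K S ⊆ conjTransporter K' S' :=
  fun _ hg k hk => hS (hg k (hK hk))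

theorem conjTransporter_image_conj (K S : Set G) (g : G) :
    conjTransporter (MulAut.conj g '' K) S = (· * g) ⁻¹' conjTransporter K S := by
  ext x
  simp [conjTransporter, mul_assoc]

theorem MonoidHom.preimage_conjTransporter_image (f : G →* H) (K : Set G) (T : Set H) :
    f ⁻¹' conjTransporter (f '' K) T = conjTransporter K (f ⁻¹' T) := by
  ext x
  simp [conjTransporter]

theorem QuotientGroup.preimage_mk'_conjTransporter (M : Subgroup G) [M.Normal] (K S : Set G) :
    mk' M ⁻¹' conjTransporter (mk' M '' K) (mk' M '' S) = conjTransporter K (S * M) := by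
  rw [(mk' M).preimage_conjTransporter_image, coe_mk', preimage_image_mk_eq_mul]

theorem QuotientGroup.conjTransporter_mk'_sdiff_subset {M N : Subgroup G} [M.Normal] (hMN : M ≤ N)
    (K U : Set G) (x : G) :
    conjTransporter (mk' M '' K) (mk' M '' U * mk' M '' N) \
        conjTransporter (mk' M '' K) ((fun y => mk' M x * y * (mk' M x)⁻¹) '' (mk' M '' U)) ⊆
      mk' M '' (conjTransporter K (U * N) \ conjTransporter K ((fun y => x * y * x⁻¹) '' U)) := by
  rintro _ ⟨hy₁, hy₂⟩
  obtain ⟨y, rfl⟩ := mk'_surjective M ‹_›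
  refine ⟨y, ⟨?_, fun hy => hy₂ ?_⟩, rfl⟩
  · have hUNM : U * N * M ⊆ U * N := by
      rw [mul_assoc]
      exact Set.mul_subset_mul_left (Set.mul_subset_iff.mpr fun n hn m hm => N.mul_mem hn (hMN hm))
    rw [← Set.image_mul, ← Set.mem_preimage, preimage_mk'_conjTransporter] at hy₁
    exact conjTransporter_mono le_rfl hUNM hy₁
  · have hconj : (fun y => mk' M x * y * (mk' M x)⁻¹) '' (mk' M '' U) =
        mk' M '' ((fun y => x * y * x⁻¹) '' U) := by
      simp only [Set.image_image, map_mul, map_inv]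
    rw [hconj, ← Set.mem_preimage, preimage_mk'_conjTransporter]
    exact conjTransporter_mono le_rfl (Set.subset_mul_left _ M.one_mem) hy

end ConjTransporter

section Topological

variable {G : Type*} [Group G] [TopologicalSpace G] [IsTopologicalGroup G]

theorem conjTransporter_closure (K : Set G) {S : Set G} (hS : IsClosed S) :
    conjTransporter (closure K) S = conjTransporter K S :=
  (conjTransporter_mono subset_closure le_rfl).antisymm fun _ hg =>
    closure_minimal hg (hS.preimage (by fun_prop))

theorem IsCompact.closure_of_mem_conjTransporter {K S : Set G} {g : G}
    (hS : IsCompact S) (hg : g ∈ conjTransporter K S) : IsCompact (closure K) :=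
  (hS.image (f := fun s => g⁻¹ * s * g) (by fun_prop)).closure_of_subset
    fun k hk => ⟨_, hg k hk, by group⟩

theorem isCompact_closure_preimage_mul_right {s : Set G} (g : G) :
    IsCompact (closure ((· * g) ⁻¹' s)) ↔ IsCompact (closure s) := by
  rw [show (· * g) = ⇑(Homeomorph.mulRight g) from rfl, ← Homeomorph.preimage_closure,
    Homeomorph.isCompact_preimage]

theorem Subgroup.not_discreteTopology_of_infinite_of_isCompact_closure [T2Space G] {K : Subgroup G}
    (hK : (K : Set G).Infinite) (hKc : IsCompact (_root_.closure (K : Set G))) :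
    ¬ DiscreteTopology K := by
  intro _
  rw [Subgroup.isClosed_of_discrete.closure_eq, isCompact_iff_compactSpace] at hKc
  exact hK (Set.finite_coe_iff.mp (finite_of_compact_of_discrete))

end Topological

theorem isTMSPair_iff {G : Type*} [Group G] [TopologicalSpace G] {K U : Subgroup G} :
    IsTMSPair K U ↔ IsCompact (U : Set G) ∧ IsOpen (U : Set G) ∧
      (∀ N : Subgroup G, N.Normal → IsCompact (N : Set G) → ∀ h : G,
        IsCompact (closure (conjTransporter K ((U : Set G) * (N : Set G)) \
          conjTransporter K ((fun x => h * x * h⁻¹) '' (U : Set G))))) ∧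
      ¬ IsCompact (closure (conjTransporter K (U : Set G))) ∧
      (∀ N : Subgroup G, N.Normal → IsCompact (N : Set G) → N.relIndex K = 0) :=
  Iff.rfl

namespace IsTMSPair

variable {G : Type*} [Group G] [TopologicalSpace G] {K U : Subgroup G}

theorem infinite (h : IsTMSPair K U) : (K : Set G).Infinite := by
  have hcard : Nat.card K = 0 := by
    simpa [Subgroup.relIndex_bot_left] using
      (isTMSPair_iff.mp h).2.2.2.2 ⊥ inferInstance (by simp)
  exact Set.infinite_coe_iff.mp
    ((Nat.card_eq_zero.mp hcard).resolve_left (not_isEmpty_of_nonempty K))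

variable [IsTopologicalGroup G]

theorem isCompact_closure (h : IsTMSPair K U) : IsCompact (closure (K : Set G)) := by
  obtain ⟨hUc, -, -, hb, -⟩ := isTMSPair_iff.mp h
  obtain ⟨g, hg⟩ : (conjTransporter (K : Set G) U).Nonempty :=
    Set.nonempty_iff_ne_empty.mpr fun he => hb (by simp [he])
  exact hUc.closure_of_mem_conjTransporter hg

theorem map_conj_topologicalClosure (h : IsTMSPair K U) (g : G) :
    IsTMSPair (K.topologicalClosure.map (MulAut.conj g).toMonoidHom) U := by
  have hK : ∀ {S : Set G}, IsClosed S →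
      conjTransporter (K.topologicalClosure.map (MulAut.conj g).toMonoidHom : Set G) S =
        (· * g) ⁻¹' conjTransporter K S := fun hS => by
    rw [Subgroup.coe_map, Subgroup.topologicalClosure_coe, MulEquiv.coe_toMonoidHom,
      conjTransporter_image_conj, conjTransporter_closure _ hS]
  obtain ⟨hUc, hUo, ha, hb, hc⟩ := isTMSPair_iff.mp h
  have hUcl : IsClosed (U : Set G) := U.isClosed_of_isOpen hUo
  refine isTMSPair_iff.mpr ⟨hUc, hUo, fun N hN hNc x => ?_, ?_, fun N hN hNc => ?_⟩
  · have hxUx : IsClosed ((fun y => x * y * x⁻¹) '' (U : Set G)) :=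
      ((Homeomorph.mulLeft x).trans (Homeomorph.mulRight x⁻¹)).isClosedMap _ hUcl
    rw [hK (hUcl.mul_right_of_isCompact hNc), hK hxUx, ← Set.preimage_sdiff,
      isCompact_closure_preimage_mul_right]
    exact ha N hN hNc x
  · rwa [hK hUcl, isCompact_closure_preimage_mul_right]
  · have := hN
    rw [N.relIndex_map_conj]
    exact Subgroup.relIndex_eq_zero_of_le_right K.le_topologicalClosure (hc N hN hNc)

theorem map_mk (h : IsTMSPair K U) (M : Subgroup G) [M.Normal] (hM : IsCompact (M : Set G)) :
    IsTMSPair (K.map (QuotientGroup.mk' M)) (U.map (QuotientGroup.mk' M)) := by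
  set π := QuotientGroup.mk' M
  have hπ : IsProperMap π := QuotientGroup.isProperMap_coe hM
  obtain ⟨hUc, hUo, ha, hb, hc⟩ := isTMSPair_iff.mp h
  refine isTMSPair_iff.mpr ⟨hUc.image hπ.continuous, QuotientGroup.isOpenMap_coe _ hUo,
    fun N hN hNc x => ?_, fun hcpt => hb ?_, fun N hN hNc => ?_⟩
  · obtain ⟨x, rfl⟩ := QuotientGroup.mk'_surjective M x
    have hNπ : (N : Set (G ⧸ M)) = π '' (N.comap π : Subgroup G) := by
      rw [← Subgroup.coe_map, Subgroup.map_comap_eq_self_of_surjective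
        (QuotientGroup.mk'_surjective M)]
    have hMN : M ≤ N.comap π := (QuotientGroup.ker_mk' M).ge.trans (MonoidHom.ker_le_comap π N)
    rw [Subgroup.coe_map, Subgroup.coe_map, hNπ]
    exact ((ha _ (hN.comap π) (hπ.isCompact_preimage hNc) x).image hπ.continuous).closure_of_subset
      ((QuotientGroup.conjTransporter_mk'_sdiff_subset hMN _ _ x).trans
        (Set.image_mono subset_closure))
  · refine (hπ.isCompact_preimage hcpt).closure_of_subset ?_
    calc conjTransporter (K : Set G) U
        ⊆ conjTransporter K (U * (M : Set G)) :=
          conjTransporter_mono le_rfl (Set.subset_mul_left _ M.one_mem)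
      _ = π ⁻¹' conjTransporter (K.map π : Set (G ⧸ M)) (U.map π) :=
          (QuotientGroup.preimage_mk'_conjTransporter M K U).symm
      _ ⊆ _ := Set.preimage_mono subset_closure
  · rw [← Subgroup.relIndex_comap]
    exact hc _ (hN.comap π) (hπ.isCompact_preimage hNc)

end IsTMSPair

theorem tms_pair_basic_general {G : Type*} [Group G] [TopologicalSpace G] [IsTopologicalGroup G]
    [T2Space G]
    (K U : Subgroup G) (hKU : IsTMSPair K U)
    (M : Subgroup G) [M.Normal] (hMc : IsCompact (M : Set G)) :
    ((K : Set G).Infinite ∧ IsCompact (closure (K : Set G)) ∧ ¬ DiscreteTopology K ∧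
      (∀ g : G, IsTMSPair ((K.topologicalClosure).map (MulAut.conj g).toMonoidHom) U)) ∧
    IsTMSPair (K.map (QuotientGroup.mk' M)) (U.map (QuotientGroup.mk' M)) :=
  ⟨⟨hKU.infinite, hKU.isCompact_closure,
      Subgroup.not_discreteTopology_of_infinite_of_isCompact_closure hKU.infinite
        hKU.isCompact_closure,
      hKU.map_conj_topologicalClosure⟩,
    hKU.map_mk M hMc⟩

/-- Lemma 4.3(i),(ii): basic properties of TMS pairs: the subgroup is infinite with
compact closure (hence nondiscrete), conjugates of its closure again form TMS pairs, and
TMS pairs pass to quotients by compact normal subgroups. -/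
theorem tms_pair_basic {G : Type*} [Group G] [TopologicalSpace G] [IsTopologicalGroup G]
    [LocallyCompactSpace G] [TotallyDisconnectedSpace G] [T2Space G]
    (K U : Subgroup G) (hKU : IsTMSPair K U)
    (M : Subgroup G) [M.Normal] (hMc : IsCompact (M : Set G)) :
    ((K : Set G).Infinite ∧ IsCompact (closure (K : Set G)) ∧ ¬ DiscreteTopology K ∧
      (∀ g : G, IsTMSPair ((K.topologicalClosure).map (MulAut.conj g).toMonoidHom) U)) ∧
    IsTMSPair (K.map (QuotientGroup.mk' M)) (U.map (QuotientGroup.mk' M)) :=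
  tms_pair_basic_general K U hKU M hMc
end
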